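/- arXiv:2308.08311 — 9 statements merged into one kernel-verified Lean document; each statement's English description precedes it below -/
import Mathlib

section
/- Let G be a connected finite graph with n vertices, let f : ℝ → ℝ be an odd function, and suppose there exists a ≠ 0 with f(a) = 0. Fix a vertex i₀. Then every configuration x ∈ ℝ^V with x_{i₀} = 0 and x_j ∈ {0, a} for every vertex j is an equilibrium of ẋ_i = Σ_{j ∈ N(i)} f(x_j − x_i); moreover, two distinct such configurations never differ by a constant vector. Consequently the system has at least 2^{n−1} equilibria that are pairwise non-equivalent up to translational symmetry. -/
/-- If `G` is connected with `n` vertices, `f` is odd and `f(a) = 0` for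
some `a ≠ 0`, then (fixing a vertex `i₀`) every configuration with `x_{i₀} = 0` and
all coordinates in `{0, a}` is an equilibrium; two distinct such configurations never
differ by a constant vector; hence there are at least `2^(n−1)` equilibria which are
pairwise non-equivalent up to translational symmetry. -/
theorem stmt_6 {V : Type} [Fintype V] [DecidableEq V]
    (G : SimpleGraph V) [DecidableRel G.Adj] (hconn : G.Connected)
    (f : ℝ → ℝ) (hodd : ∀ t : ℝ, f (-t) = -f t)
    (a : ℝ) (ha : a ≠ 0) (hfa : f a = 0) (i₀ : V) :
    -- every `{0,a}`-valued configuration vanishing at `i₀` is an equilibrium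
    (∀ x : V → ℝ, x i₀ = 0 → (∀ j, x j = 0 ∨ x j = a) →
      ∀ i : V, ∑ j ∈ G.neighborFinset i, f (x j - x i) = 0) ∧
    -- two distinct such configurations never differ by a constant vector
    (∀ x y : V → ℝ, x i₀ = 0 → (∀ j, x j = 0 ∨ x j = a) →
      y i₀ = 0 → (∀ j, y j = 0 ∨ y j = a) →
      (∃ c : ℝ, ∀ i, x i = y i + c) → x = y) ∧
    -- at least `2^(n−1)` pairwise non-equivalent equilibria
    (∃ S : Finset (V → ℝ),
      2 ^ (Fintype.card V - 1) ≤ S.card ∧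
      (∀ x ∈ S, ∀ i : V, ∑ j ∈ G.neighborFinset i, f (x j - x i) = 0) ∧
      (∀ x ∈ S, ∀ y ∈ S, x ≠ y → ¬ ∃ c : ℝ, ∀ i, x i = y i + c)) := by
  have hf0 : f 0 = 0 := by have := hodd 0; simp at this; linarith
  have hfna : f (-a) = 0 := by rw [hodd]; simp [hfa]
  have eq1 : ∀ x : V → ℝ, x i₀ = 0 → (∀ j, x j = 0 ∨ x j = a) →
      ∀ i : V, ∑ j ∈ G.neighborFinset i, f (x j - x i) = 0 := by
    intro x _ hx i
    apply Finset.sum_eq_zero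
    intro j _
    rcases hx j with hj | hj <;> rcases hx i with hi | hi <;>
      simp [hj, hi, hf0, hfa, hfna]
  have eq2 : ∀ x y : V → ℝ, x i₀ = 0 → (∀ j, x j = 0 ∨ x j = a) →
      y i₀ = 0 → (∀ j, y j = 0 ∨ y j = a) →
      (∃ c : ℝ, ∀ i, x i = y i + c) → x = y := by
    rintro x y hx0 _ hy0 _ ⟨c, hc⟩
    have hc0 : c = 0 := by have := hc i₀; rw [hx0, hy0] at this; linarith
    funext i
    simpa [hc0] using hc i
  refine ⟨eq1, eq2, ?_⟩
  classical
  set S : Finset (V → ℝ) :=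
    (Finset.univ.erase i₀).powerset.image
      (fun s : Finset V => fun j => if j ∈ s then a else 0) with hS
  have hmem : ∀ x ∈ S, x i₀ = 0 ∧ ∀ j, x j = 0 ∨ x j = a := by
    intro x hx
    simp only [hS, Finset.mem_image, Finset.mem_powerset] at hx
    obtain ⟨s, hs, rfl⟩ := hx
    constructor
    · have : i₀ ∉ s := fun h => (Finset.mem_erase.mp (hs h)).1 rfl
      simp [this]
    · intro j; by_cases h : j ∈ s <;> simp [h]
  refine ⟨S, ?_, ?_, ?_⟩
  · have hinj : Set.InjOn (fun s : Finset V => fun j => if j ∈ s then a else 0)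
        ((Finset.univ.erase i₀).powerset : Finset (Finset V)) := by
      intro s hs t ht h
      ext j
      have := congrFun h j
      by_cases hj : j ∈ s <;> by_cases hj' : j ∈ t <;>
        simp [hj, hj'] at this ⊢ <;> first | exact ha this | exact ha this.symm
    rw [hS, Finset.card_image_of_injOn hinj, Finset.card_powerset,
      Finset.card_erase_of_mem (Finset.mem_univ i₀), Finset.card_univ]
  · intro x hx i
    obtain ⟨h0, hr⟩ := hmem x hx
    exact eq1 x h0 hr i
  · intro x hx y hy hxy hc
    obtain ⟨h0, hr⟩ := hmem x hx
    obtain ⟨h0', hr'⟩ := hmem y hy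
    exact hxy (eq2 x y h0 hr h0' hr' hc)
end

section
/- Let G be a finite graph with at least one edge and let f : ℝ → ℝ be a non-constant, odd, real-analytic function. Then the following are equivalent: (1) 0 is the only zero of f; (2) every equilibrium x ∈ ℝ^V of ẋ_i = Σ_{j ∈ N(i)} f(x_j − x_i) satisfies x_i = x_j for every edge {i,j} of G (i.e., the only equilibrium up to translational symmetry is the zero one). -/
/-!
If `0` is the only zero of the continuous odd function `f`, then `t * f t` has one fixed sign
for all `t ≠ 0`. Multiplying the equilibrium equations by `x i`, summing and symmetrising with
oddness gives `∑_{i ~ j} (x j - x i) f (x j - x i) = 0`, a sum of terms of one sign, so every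
edge difference vanishes. Conversely, a zero `t ≠ 0` of `f` makes the vector that is `t` at one
endpoint of an edge and `0` elsewhere an equilibrium with unequal endpoint values.
-/

open Finset

theorem IsPreconnected.mul_pos_of_ne_zero {X : Type*} [TopologicalSpace X] {s : Set X}
    (hs : IsPreconnected s) {f : X → ℝ} (hf : ContinuousOn f s) (hz : ∀ x ∈ s, f x ≠ 0)
    {a b : X} (ha : a ∈ s) (hb : b ∈ s) : 0 < f a * f b := by
  by_contra! hab
  have hzero : 0 ∈ f '' s := by
    rcases mul_nonpos_iff.1 hab with ⟨hfa, hfb⟩ | ⟨hfa, hfb⟩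
    · exact hs.intermediate_value hb ha hf ⟨hfb, hfa⟩
    · exact hs.intermediate_value ha hb hf ⟨hfa, hfb⟩
  obtain ⟨x, hx, hfx⟩ := hzero
  exact hz x hx hfx

/-- The sign of `f 1` is the common sign of `t * f t` for `t ≠ 0`. -/
theorem Function.Odd.mul_mul_apply_pos {f : ℝ → ℝ} (hodd : f.Odd) (hf : Continuous f)
    (hz : ∀ t, f t = 0 → t = 0) {t : ℝ} (ht : t ≠ 0) : 0 < f 1 * (t * f t) := by
  have hsign : ∀ a, 0 < a → 0 < f 1 * f a := fun a ha =>
    isPreconnected_Ioi.mul_pos_of_ne_zero hf.continuousOn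
      (fun x hx h => (Set.mem_Ioi.1 hx).ne' (hz x h)) (Set.mem_Ioi.2 one_pos)
      (Set.mem_Ioi.2 ha)
  rcases ht.lt_or_gt with hneg | hpos
  · have := hsign (-t) (neg_pos.2 hneg)
    rw [hodd] at this
    nlinarith
  · nlinarith [hsign t hpos]

namespace SimpleGraph

variable {V : Type*} [Fintype V] (G : SimpleGraph V) [DecidableRel G.Adj]

def IsEquilibrium (f : ℝ → ℝ) (x : V → ℝ) : Prop :=
  ∀ i, ∑ j ∈ G.neighborFinset i, f (x j - x i) = 0

theorem sum_sum_neighborFinset_comm {M : Type*} [AddCommMonoid M] (k : V → V → M) :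
    ∑ i, ∑ j ∈ G.neighborFinset i, k i j = ∑ i, ∑ j ∈ G.neighborFinset i, k j i :=
  sum_comm' fun i j => by simp [G.adj_comm]

/-- The discrete integration by parts behind the energy argument. -/
theorem sum_sum_sub_mul_apply_sub {f : ℝ → ℝ} (hodd : f.Odd) (x : V → ℝ) :
    ∑ i, ∑ j ∈ G.neighborFinset i, (x j - x i) * f (x j - x i) =
      -2 * ∑ i, x i * ∑ j ∈ G.neighborFinset i, f (x j - x i) := by
  have hswap : ∑ i, ∑ j ∈ G.neighborFinset i, x j * f (x j - x i) =
      -∑ i, x i * ∑ j ∈ G.neighborFinset i, f (x j - x i) := by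
    rw [G.sum_sum_neighborFinset_comm, ← sum_neg_distrib]
    refine sum_congr rfl fun i _ => ?_
    rw [mul_sum, ← sum_neg_distrib]
    refine sum_congr rfl fun j _ => ?_
    rw [← neg_sub, hodd, mul_neg]
  have hself : ∑ i, ∑ j ∈ G.neighborFinset i, x i * f (x j - x i) =
      ∑ i, x i * ∑ j ∈ G.neighborFinset i, f (x j - x i) := by
    simp only [mul_sum]
  simp only [sub_mul, sum_sub_distrib, hswap, hself]
  ring

theorem eq_of_adj_of_equilibrium {f : ℝ → ℝ} (hodd : f.Odd) (hf : Continuous f)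
    (hz : ∀ t, f t = 0 → t = 0) {x : V → ℝ} (hx : G.IsEquilibrium f x) {i j : V}
    (hij : G.Adj i j) : x i = x j := by
  have hterm_nonneg : ∀ t, 0 ≤ f 1 * (t * f t) := fun t => by
    rcases eq_or_ne t 0 with rfl | ht
    · simp
    · exact (hodd.mul_mul_apply_pos hf hz ht).le
  have htotal : ∑ i, ∑ j ∈ G.neighborFinset i, f 1 * ((x j - x i) * f (x j - x i)) = 0 := by
    simp only [← mul_sum, G.sum_sum_sub_mul_apply_sub hodd x, hx _, mul_zero,
      sum_const_zero]
  have hvertex : ∑ j ∈ G.neighborFinset i, f 1 * ((x j - x i) * f (x j - x i)) = 0 :=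
    (sum_eq_zero_iff_of_nonneg fun _ _ => sum_nonneg fun _ _ => hterm_nonneg _).1 htotal i
      (mem_univ i)
  have hedge : f 1 * ((x j - x i) * f (x j - x i)) = 0 :=
    (sum_eq_zero_iff_of_nonneg fun _ _ => hterm_nonneg _).1 hvertex j
      ((G.mem_neighborFinset i j).2 hij)
  by_contra hne
  exact (hodd.mul_mul_apply_pos hf hz (sub_ne_zero.2 (Ne.symm hne))).ne' hedge

theorem isEquilibrium_single [DecidableEq V] {f : ℝ → ℝ} (hodd : f.Odd) {t : ℝ}
    (ht : f t = 0) (v : V) : G.IsEquilibrium f (Pi.single v t) := fun i => by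
  refine sum_eq_zero fun j _ => ?_
  simp only [Pi.single_apply]
  split_ifs <;> simp [ht, hodd t, hodd.map_zero]

end SimpleGraph

theorem stmt_7_general {V : Type} [Fintype V] [DecidableEq V]
    (G : SimpleGraph V) [DecidableRel G.Adj] (hedge : ∃ i j : V, G.Adj i j)
    (f : ℝ → ℝ) (hodd : ∀ t : ℝ, f (-t) = -f t)
    (han : ∀ t : ℝ, AnalyticAt ℝ f t) :
    (∀ t : ℝ, f t = 0 → t = 0) ↔
      (∀ x : V → ℝ, (∀ i : V, ∑ j ∈ G.neighborFinset i, f (x j - x i) = 0) →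
        ∀ i j : V, G.Adj i j → x i = x j) := by
  have hf : Continuous f := continuous_iff_continuousAt.2 fun t => (han t).continuousAt
  refine ⟨fun hz x hx i j => G.eq_of_adj_of_equilibrium hodd hf hz hx, fun heq t ht => ?_⟩
  obtain ⟨v, w, hvw⟩ := hedge
  simpa [Pi.single_apply, hvw.ne'] using heq _ (G.isEquilibrium_single hodd ht v) v w hvw

/-- For a finite graph `G` with at least one edge and a non-constant odd
real-analytic `f`, the following are equivalent: (1) `0` is the only zero of `f`;
(2) every equilibrium `x` of `ẋ_i = ∑_{j ∈ N(i)} f(x_j − x_i)` satisfies `x_i = x_j`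
for every edge `{i,j}` (the only equilibrium up to translational symmetry is zero). -/
theorem stmt_7 {V : Type} [Fintype V] [DecidableEq V]
    (G : SimpleGraph V) [DecidableRel G.Adj] (hedge : ∃ i j : V, G.Adj i j)
    (f : ℝ → ℝ) (hodd : ∀ t : ℝ, f (-t) = -f t)
    (hnc : ∃ a b : ℝ, f a ≠ f b) (han : ∀ t : ℝ, AnalyticAt ℝ f t) :
    (∀ t : ℝ, f t = 0 → t = 0) ↔
      (∀ x : V → ℝ, (∀ i : V, ∑ j ∈ G.neighborFinset i, f (x j - x i) = 0) →
        ∀ i j : V, G.Adj i j → x i = x j) :=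
  stmt_7_general G hedge f hodd han
end

section
/- Let G be a finite graph and let f : ℝ → ℝ be a non-constant, odd, real-analytic function such that f(x) ≥ 0 for every x > 0 (or f(x) ≤ 0 for every x > 0). Then every equilibrium x ∈ ℝ^V of ẋ_i = Σ_{j ∈ N(i)} f(x_j − x_i) satisfies f(x_j − x_i) = 0 for every edge {i,j}; that is, for every edge the difference x_j − x_i lies in the zero set Z(f) of f. In particular, the set of equilibria up to symmetry 𝓔(G,f) is a discrete subset of ℝ^E. -/
open Matrix

/-- `Eo` is a fixed orientation of the edges of `G`. -/
def IsOrientation {α : Type} (G : SimpleGraph α) (Eo : Finset (α × α)) : Prop :=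
  (∀ e ∈ Eo, G.Adj e.1 e.2) ∧
  (∀ i j : α, G.Adj i j → ((i, j) ∈ Eo ∨ (j, i) ∈ Eo)) ∧
  (∀ i j : α, (i, j) ∈ Eo → (j, i) ∉ Eo)

lemma isolated_zero (f : ℝ → ℝ) (hnc : ∃ a b : ℝ, f a ≠ f b)
    (han : ∀ t : ℝ, AnalyticAt ℝ f t) (t : ℝ) :
    ∃ ε > 0, ∀ s : ℝ, |s - t| < ε → f s = 0 → s = t := by
  rcases (han t).eventually_eq_zero_or_eventually_ne_zero with h | h
  · exfalso
    obtain ⟨a, b, hab⟩ := hnc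
    have hz : Set.EqOn f 0 Set.univ :=
      AnalyticOnNhd.eqOn_zero_of_preconnected_of_eventuallyEq_zero
        (fun z _ => han z) isPreconnected_univ (Set.mem_univ t) h
    exact hab (by simp [hz (Set.mem_univ a), hz (Set.mem_univ b)])
  · rw [eventually_nhdsWithin_iff, Metric.eventually_nhds_iff] at h
    obtain ⟨ε, hε, hball⟩ := h
    refine ⟨ε, hε, fun s hs hfs => ?_⟩
    by_contra hne
    exact hball (by simpa [Real.dist_eq] using hs) hne hfs

lemma tf_sign (f : ℝ → ℝ) (hodd : ∀ t : ℝ, f (-t) = -f t)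
    (hsign : (∀ t : ℝ, 0 < t → 0 ≤ f t) ∨ (∀ t : ℝ, 0 < t → f t ≤ 0)) :
    (∀ t : ℝ, 0 ≤ t * f t) ∨ (∀ t : ℝ, t * f t ≤ 0) := by
  rcases hsign with h | h
  · left
    intro t
    rcases lt_trichotomy t 0 with ht | ht | ht
    · have h1 := h (-t) (by linarith)
      rw [hodd] at h1
      nlinarith
    · simp [ht]
    · exact mul_nonneg ht.le (h t ht)
  · right
    intro t
    rcases lt_trichotomy t 0 with ht | ht | ht
    · have h1 := h (-t) (by linarith)
      rw [hodd] at h1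
      nlinarith
    · simp [ht]
    · exact mul_nonpos_of_nonneg_of_nonpos ht.le (h t ht)

lemma sum_zero_same_sign {ι : Type*} (s : Finset ι) (a : ι → ℝ)
    (hsign : (∀ i, 0 ≤ a i) ∨ (∀ i, a i ≤ 0)) (h : ∑ i ∈ s, a i = 0) :
    ∀ i ∈ s, a i = 0 := by
  rcases hsign with h1 | h1
  · exact fun i hi => (Finset.sum_eq_zero_iff_of_nonneg (fun i _ => h1 i)).mp h i hi
  · exact fun i hi => (Finset.sum_eq_zero_iff_of_nonpos (fun i _ => h1 i)).mp h i hi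

/-- If `f` is a non-constant odd real-analytic function with `f ≥ 0` on
`(0,∞)` or `f ≤ 0` on `(0,∞)`, then every equilibrium `x` satisfies
`f(x_j − x_i) = 0` for every edge `{i,j}`, and the set of equilibria up to symmetry
`𝓔(G,f) = f⁻¹(H₁) ∩ H₁^⊥ ⊆ ℝ^E` is a discrete subset of edge space. -/
theorem stmt_8 {V : Type} [Fintype V] [DecidableEq V]
    (G : SimpleGraph V) [DecidableRel G.Adj]
    (f : ℝ → ℝ) (hodd : ∀ t : ℝ, f (-t) = -f t)
    (hnc : ∃ a b : ℝ, f a ≠ f b) (han : ∀ t : ℝ, AnalyticAt ℝ f t)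
    (hsign : (∀ t : ℝ, 0 < t → 0 ≤ f t) ∨ (∀ t : ℝ, 0 < t → f t ≤ 0))
    (Eo : Finset (V × V)) (hor : IsOrientation G Eo)
    (B : Matrix V {e // e ∈ Eo} ℝ)
    (hB : ∀ (i : V) (e : {e // e ∈ Eo}),
      B i e = (if i = (e : V × V).2 then (1 : ℝ) else 0)
            - (if i = (e : V × V).1 then (1 : ℝ) else 0))
    (H₁ : Submodule ℝ ({e // e ∈ Eo} → ℝ)) (hH₁ : H₁ = LinearMap.ker B.mulVecLin)
    (S : Set ({e // e ∈ Eo} → ℝ))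
    (hS : S = {y | (fun e => f (y e)) ∈ H₁ ∧ ∀ z ∈ H₁, ∑ e, y e * z e = 0}) :
    -- every equilibrium has vanishing coupling along each edge
    (∀ x : V → ℝ, (∀ i : V, ∑ j ∈ G.neighborFinset i, f (x j - x i) = 0) →
      ∀ i j : V, G.Adj i j → f (x j - x i) = 0) ∧
    -- `𝓔(G,f)` is a discrete subset of edge space
    (∀ y ∈ S, ∃ U : Set ({e // e ∈ Eo} → ℝ),
      IsOpen U ∧ y ∈ U ∧ ∀ z ∈ S, z ∈ U → z = y) := by
  have hf0 : f 0 = 0 := by have := hodd 0; simp at this; linarith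
  have hkey : ∀ t : ℝ, t * f t = 0 → f t = 0 := by
    intro t ht
    rcases mul_eq_zero.mp ht with h | h
    · rw [h, hf0]
    · exact h
  have hsgn := tf_sign f hodd hsign
  have hfneg : ∀ a b : ℝ, f (a - b) = - f (b - a) := by
    intro a b
    rw [← neg_sub, hodd]
  constructor
  · -- part 1
    intro x hx i₀ j₀ hadj
    -- the double sum of (x j - x i) * f (x j - x i) vanishes
    have hswap : ∀ g : V → V → ℝ,
        ∑ i, ∑ j ∈ G.neighborFinset i, g i j = ∑ i, ∑ j ∈ G.neighborFinset i, g j i := by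
      intro g
      simp only [SimpleGraph.neighborFinset_eq_filter, Finset.sum_filter]
      rw [Finset.sum_comm]
      refine Finset.sum_congr rfl fun i _ => Finset.sum_congr rfl fun j _ => ?_
      simp only [G.adj_comm j i]
    have hS2 : ∑ i, ∑ j ∈ G.neighborFinset i, x i * f (x j - x i) = 0 := by
      apply Finset.sum_eq_zero
      intro i _
      rw [← Finset.mul_sum, hx i, mul_zero]
    have hS1 : ∑ i, ∑ j ∈ G.neighborFinset i, x j * f (x j - x i) = 0 := by
      rw [hswap (fun i j => x j * f (x j - x i))]
      calc ∑ i, ∑ j ∈ G.neighborFinset i, x i * f (x i - x j)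
          = -∑ i, ∑ j ∈ G.neighborFinset i, x i * f (x j - x i) := by
            rw [← Finset.sum_neg_distrib]
            refine Finset.sum_congr rfl fun i _ => ?_
            rw [← Finset.sum_neg_distrib]
            refine Finset.sum_congr rfl fun j _ => ?_
            rw [hfneg (x i) (x j), mul_neg]
        _ = 0 := by rw [hS2, neg_zero]
    have hT : ∑ i, ∑ j ∈ G.neighborFinset i, (x j - x i) * f (x j - x i) = 0 := by
      have : ∀ i j : V, (x j - x i) * f (x j - x i)
          = x j * f (x j - x i) - x i * f (x j - x i) := fun i j => by ring
      simp only [this, Finset.sum_sub_distrib]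
      rw [hS1, hS2, sub_zero]
    have houter : ∀ i : V, ∑ j ∈ G.neighborFinset i, (x j - x i) * f (x j - x i) = 0 := by
      intro i
      refine sum_zero_same_sign Finset.univ
        (fun i => ∑ j ∈ G.neighborFinset i, (x j - x i) * f (x j - x i)) ?_ hT i
        (Finset.mem_univ i)
      rcases hsgn with h | h
      · exact Or.inl fun i => Finset.sum_nonneg fun j _ => h _
      · exact Or.inr fun i => Finset.sum_nonpos fun j _ => h _
    have hterm : (x j₀ - x i₀) * f (x j₀ - x i₀) = 0 := by
      refine sum_zero_same_sign (G.neighborFinset i₀)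
        (fun j => (x j - x i₀) * f (x j - x i₀)) ?_ (houter i₀) j₀
        (by rwa [SimpleGraph.mem_neighborFinset])
      rcases hsgn with h | h
      · exact Or.inl fun j => h _
      · exact Or.inr fun j => h _
    exact hkey _ hterm
  · -- part 2
    intro y hy
    rw [hS] at hy
    obtain ⟨h1, h2⟩ := hy
    have h0 : ∑ e, y e * f (y e) = 0 := h2 _ h1
    have hfz : ∀ e, f (y e) = 0 := by
      intro e
      refine hkey _ (sum_zero_same_sign Finset.univ (fun e => y e * f (y e)) ?_ h0 e
        (Finset.mem_univ e))
      rcases hsgn with h | h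
      · exact Or.inl fun e => h _
      · exact Or.inr fun e => h _
    choose ε hε hiso using fun e : {e // e ∈ Eo} => isolated_zero f hnc han (y e)
    refine ⟨⋂ e, {z | |z e - y e| < ε e}, ?_, ?_, ?_⟩
    · refine isOpen_iInter_of_finite fun e => ?_
      have : {z : {e // e ∈ Eo} → ℝ | |z e - y e| < ε e}
          = (fun z : {e // e ∈ Eo} → ℝ => z e) ⁻¹' Metric.ball (y e) (ε e) := by
        ext z
        simp [Metric.mem_ball, Real.dist_eq]
      rw [this]
      exact Metric.isOpen_ball.preimage (continuous_apply e)
    · refine Set.mem_iInter.mpr fun e => ?_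
      simp [hε e]
    · intro z hz hzU
      rw [hS] at hz
      obtain ⟨hz1, hz2⟩ := hz
      have hz0 : ∑ e, z e * f (z e) = 0 := hz2 _ hz1
      have hzf : ∀ e, f (z e) = 0 := by
        intro e
        refine hkey _ (sum_zero_same_sign Finset.univ (fun e => z e * f (z e)) ?_ hz0 e
          (Finset.mem_univ e))
        rcases hsgn with h | h
        · exact Or.inl fun e => h _
        · exact Or.inr fun e => h _
      funext e
      exact hiso e (z e) (Set.mem_iInter.mp hzU e) (hzf e)
end

section
/- Let G be a finite graph and let f : ℝ → ℝ be a non-constant, odd, real-analytic, increasing function. Then every global solution x : [0, ∞) → ℝ^V of ẋ_i = Σ_{j ∈ N(i)} f(x_j − x_i) converges as t → ∞ to the equilibrium x* that is constant on each connected component K of G with value (Σ_{i ∈ K} x_i(0)) / |K|; in particular x_j(t) − x_i(t) → 0 for every edge {i,j}. Moreover the energy function E(x) = Σ_{(j,k) ∈ E} g(x_k − x_j), for g a primitive of f, is convex. -/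
open Filter

/-!
Since `f` is odd, the flow conserves the sum of the coordinates over each connected component, so
a solution stays on the affine subspace `C` where these sums are those of `x 0`, and on `C` the
componentwise average `m` of `x 0` is the only equilibrium. Along the flow
`W = ∑ i, (x i - m i) ^ 2` has derivative `-∑_{i ∼ j} (x j - x i) f (x j - x i) ≤ 0`, which vanishes
only at equilibria because `s f(s) > 0` for `s ≠ 0`. If `W` stayed above some `ε > 0`, this
derivative would be bounded away from `0` on the compact set `C ∩ {ε ≤ W ≤ W (x 0)}`, and `W`
would become negative in finite time; hence `W → 0`, that is `x → m` (a LaSalle argument).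
The energy is convex because `g' = f` is increasing, so `g` is convex, and the energy is a sum of
`g` composed with linear maps.
-/

open Set Topology

theorem ConvexOn.sum {𝕜 E β ι : Type*} [Semiring 𝕜] [PartialOrder 𝕜] [AddCommMonoid E]
    [AddCommMonoid β] [PartialOrder β] [IsOrderedAddMonoid β] [SMul 𝕜 E] [Module 𝕜 β]
    {s : Set E} {t : Finset ι} {f : ι → E → β} (hs : Convex 𝕜 s)
    (hf : ∀ i ∈ t, ConvexOn 𝕜 s (f i)) : ConvexOn 𝕜 s fun x => ∑ i ∈ t, f i x := by
  classical
  induction t using Finset.induction_on with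
  | empty => simpa using convexOn_const (0 : β) hs
  | insert i t hi ih =>
    simp only [Finset.sum_insert hi]
    exact (hf i (t.mem_insert_self i)).add (ih fun j hj => hf j (Finset.mem_insert_of_mem hj))

lemma ConvexOn.comp_apply_sub_apply {ι : Type*} {g : ℝ → ℝ} (hg : ConvexOn ℝ univ g) (i j : ι) :
    ConvexOn ℝ univ fun y : ι → ℝ => g (y j - y i) := by
  exact hg.comp_linearMap (LinearMap.proj (R := ℝ) (φ := fun _ : ι => ℝ) j - LinearMap.proj i)

lemma mul_apply_nonneg_of_monotone {f : ℝ → ℝ} (hf : Monotone f) (h0 : f 0 = 0) (s : ℝ) :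
    0 ≤ s * f s := by
  rcases le_total 0 s with hs | hs
  · exact mul_nonneg hs (h0 ▸ hf hs)
  · exact mul_nonneg_of_nonpos_of_nonpos hs (h0 ▸ hf hs)

lemma eq_zero_of_mul_apply_eq_zero {f : ℝ → ℝ} (hf : StrictMono f) (h0 : f 0 = 0) {s : ℝ}
    (hs : s * f s = 0) : s = 0 :=
  (mul_eq_zero.1 hs).elim id fun h => hf.injective (h.trans h0.symm)

lemma antitoneOn_Ici_of_hasDerivWithinAt_nonpos {L L' : ℝ → ℝ} {a : ℝ}
    (hL : ∀ t ∈ Ici a, HasDerivWithinAt L (L' t) (Ici a) t) (hL' : ∀ t ∈ Ici a, L' t ≤ 0) :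
    AntitoneOn L (Ici a) := by
  refine antitoneOn_of_hasDerivWithinAt_nonpos (f' := L') (convex_Ici a)
    (fun t ht => (hL t ht).continuousWithinAt) (fun t ht => ?_) (fun t ht => ?_)
  · rw [interior_Ici] at ht ⊢
    exact (hL t (Ioi_subset_Ici_self ht)).mono Ioi_subset_Ici_self
  · rw [interior_Ici] at ht
    exact hL' t (Ioi_subset_Ici_self ht)

lemma dist_le_sqrt_sum_sq {ι : Type*} [Fintype ι] (y z : ι → ℝ) :
    dist y z ≤ √(∑ i, (y i - z i) ^ 2) := by
  refine (dist_pi_le_iff (Real.sqrt_nonneg _)).2 fun i => ?_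
  rw [Real.dist_eq, ← Real.sqrt_sq_eq_abs]
  exact Real.sqrt_le_sqrt
    (Finset.single_le_sum (f := fun i => (y i - z i) ^ 2) (fun j _ => sq_nonneg _)
      (Finset.mem_univ i))

lemma tendsto_of_sum_sq_sub_tendsto_zero {α ι : Type*} [Fintype ι] {l : Filter α}
    {x : α → ι → ℝ} {m : ι → ℝ} (h : Tendsto (fun t => ∑ i, (x t i - m i) ^ 2) l (𝓝 0)) :
    Tendsto x l (𝓝 m) := by
  have hsqrt : Tendsto (fun t => √(∑ i, (x t i - m i) ^ 2)) l (𝓝 0) := by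
    simpa using h.sqrt
  exact tendsto_iff_dist_tendsto_zero.2
    (squeeze_zero (fun _ => dist_nonneg) (fun t => dist_le_sqrt_sum_sq (x t) m) hsqrt)

theorem tendsto_zero_of_hasDerivWithinAt_neg {E : Type*} [PseudoMetricSpace E] [ProperSpace E]
    {x : ℝ → E} {C : Set E} {W Q : E → ℝ} (hC : IsClosed C) (hxC : ∀ t ∈ Ici (0 : ℝ), x t ∈ C)
    (hW : Continuous W) (hQ : Continuous Q) (hW0 : ∀ y, 0 ≤ W y)
    (hWbdd : ∀ c, Bornology.IsBounded {y | W y ≤ c}) (hQ0 : ∀ y, 0 ≤ Q y)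
    (hQW : ∀ y ∈ C, Q y = 0 → W y = 0)
    (hderiv : ∀ t ∈ Ici (0 : ℝ), HasDerivWithinAt (fun s => W (x s)) (-Q (x t)) (Ici 0) t) :
    Tendsto (fun t => W (x t)) atTop (𝓝 0) := by
  have hanti : AntitoneOn (fun t => W (x t)) (Ici 0) :=
    antitoneOn_Ici_of_hasDerivWithinAt_nonpos hderiv fun t _ => neg_nonpos.2 (hQ0 _)
  have hsmall : ∀ ε > 0, ∃ t, 0 ≤ t ∧ W (x t) < ε := by
    intro ε hε
    by_contra! hlow
    let A := C ∩ {y | ε ≤ W y} ∩ {y | W y ≤ W (x 0)}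
    have hA : IsCompact A :=
      Metric.isCompact_of_isClosed_isBounded
        ((hC.inter (isClosed_le continuous_const hW)).inter (isClosed_le hW continuous_const))
        ((hWbdd _).subset inter_subset_right)
    -- on `A` the dissipation `Q` cannot vanish, since `W ≥ ε > 0` there
    obtain ⟨δ, hδ, hδA⟩ := hA.exists_forall_le' hQ.continuousOn (a := 0) fun y hy =>
      (hQ0 y).lt_of_ne' fun h => (hε.trans_le hy.1.2).ne' (hQW y hy.1.1 h)
    have hdecay : AntitoneOn (fun t => W (x t) + δ * t) (Ici 0) := by
      refine antitoneOn_Ici_of_hasDerivWithinAt_nonpos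
        (fun t ht => (hderiv t ht).add ((hasDerivWithinAt_id t _).const_mul δ)) fun t ht => ?_
      have : δ ≤ Q (x t) :=
        hδA _ ⟨⟨hxC t ht, hlow t ht⟩, hanti self_mem_Ici ht (mem_Ici.1 ht)⟩
      linarith
    set T := W (x 0) / δ + 1 with hT_def
    have hT : 0 ≤ T := by have := hW0 (x 0); positivity
    have hδT : δ * T = W (x 0) + δ := by rw [hT_def]; field_simp
    have hend := hdecay self_mem_Ici hT hT
    simp only [mul_zero, add_zero, hδT] at hend
    linarith [hW0 (x T)]
  refine tendsto_order.2 ⟨fun a ha => Eventually.of_forall fun t => ha.trans_le (hW0 _),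
    fun a ha => ?_⟩
  obtain ⟨t₀, ht₀, hlt⟩ := hsmall a ha
  filter_upwards [eventually_ge_atTop t₀] with t ht
  exact (hanti ht₀ (ht₀.trans ht) ht).trans_lt hlt

namespace SimpleGraph

variable {V : Type*} {G : SimpleGraph V}

lemma Reachable.eq_of_forall_adj {α : Type*} {y : V → α} (hy : ∀ i j, G.Adj i j → y i = y j)
    {i j : V} (h : G.Reachable i j) : y i = y j := by
  obtain ⟨p⟩ := h
  induction p with
  | nil => rfl
  | cons hadj _ ih => exact (hy _ _ hadj).trans ih

variable [Fintype V]

section Components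

variable (G) [DecidableEq G.ConnectedComponent]

def componentFinset (i : V) : Finset V :=
  Finset.univ.filter fun j => G.connectedComponentMk j = G.connectedComponentMk i

noncomputable def componentAverage (y : V → ℝ) (i : V) : ℝ :=
  (∑ j ∈ G.componentFinset i, y j) / (G.componentFinset i).card

variable {G}

lemma mem_componentFinset {i j : V} : j ∈ G.componentFinset i ↔ G.Reachable j i := by
  simp [componentFinset, ConnectedComponent.eq]

lemma mem_componentFinset_of_adj {i j k : V} (hj : j ∈ G.componentFinset i) (hjk : G.Adj j k) :
    k ∈ G.componentFinset i :=
  mem_componentFinset.2 (hjk.symm.reachable.trans (mem_componentFinset.1 hj))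

lemma componentAverage_eq_of_adj (y : V → ℝ) {i j : V} (hij : G.Adj i j) :
    G.componentAverage y i = G.componentAverage y j := by
  have : G.componentFinset i = G.componentFinset j := by
    ext k
    simp only [mem_componentFinset]
    exact ⟨fun h => h.trans hij.reachable, fun h => h.trans hij.symm.reachable⟩
  rw [componentAverage, componentAverage, this]

lemma eq_componentAverage {y z : V → ℝ} (hy : ∀ i j, G.Adj i j → y i = y j)
    (hsum : ∀ i, ∑ j ∈ G.componentFinset i, y j = ∑ j ∈ G.componentFinset i, z j) :
    y = G.componentAverage z := by
  funext i
  have hconst : ∀ j ∈ G.componentFinset i, y j = y i := fun j hj =>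
    (mem_componentFinset.1 hj).eq_of_forall_adj hy
  have hcard : (0 : ℝ) < (G.componentFinset i).card :=
    Nat.cast_pos.2 (Finset.card_pos.2 ⟨i, mem_componentFinset.2 (Reachable.refl i)⟩)
  rw [componentAverage, ← hsum, Finset.sum_congr rfl hconst, Finset.sum_const, nsmul_eq_mul,
    mul_div_cancel_left₀ _ hcard.ne']

end Components

variable (G) [DecidableRel G.Adj]

def consensusField (f : ℝ → ℝ) (y : V → ℝ) (i : V) : ℝ :=
  ∑ j ∈ G.neighborFinset i, f (y j - y i)

def dissipation (f : ℝ → ℝ) (y : V → ℝ) : ℝ :=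
  ∑ i, ∑ j ∈ G.neighborFinset i, (y j - y i) * f (y j - y i)

lemma sum_sum_neighborFinset_eq_zero {β : Type*} [AddCommMonoid β] {s : Finset V}
    (hs : ∀ i ∈ s, ∀ j, G.Adj i j → j ∈ s) {h : V → V → β}
    (hanti : ∀ i j, G.Adj i j → h i j + h j i = 0) :
    ∑ i ∈ s, ∑ j ∈ G.neighborFinset i, h i j = 0 := by
  rw [Finset.sum_sigma']
  refine Finset.sum_involution (fun p _ => ⟨p.2, p.1⟩) (fun p hp => ?_) (fun p hp _ => ?_)
    (fun p hp => ?_) fun _ _ => rfl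
  all_goals
    obtain ⟨hp₁, hp₂⟩ := Finset.mem_sigma.1 hp
    rw [mem_neighborFinset] at hp₂
  · exact hanti _ _ hp₂
  · exact fun heq => hp₂.ne' (congrArg Sigma.fst heq)
  · exact Finset.mem_sigma.2 ⟨hs _ hp₁ _ hp₂, (mem_neighborFinset _ _ _).2 hp₂.symm⟩

variable {G} {f : ℝ → ℝ}

lemma sum_consensusField_eq_zero (hf : f.Odd) {s : Finset V}
    (hs : ∀ i ∈ s, ∀ j, G.Adj i j → j ∈ s) (y : V → ℝ) :
    ∑ i ∈ s, G.consensusField f y i = 0 :=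
  G.sum_sum_neighborFinset_eq_zero hs fun i j _ => by
    rw [← neg_sub, hf.eq, neg_add_cancel]

lemma sum_mul_consensusField_eq_neg_dissipation (hf : f.Odd) {m : V → ℝ}
    (hm : ∀ i j, G.Adj i j → m i = m j) (y : V → ℝ) :
    ∑ i, 2 * (y i - m i) * G.consensusField f y i = -G.dissipation f y := by
  -- `(y i + y j - 2 m i) f (y j - y i)` is antisymmetric on edges because `m` is constant on them
  have hpair : ∑ i, ∑ j ∈ G.neighborFinset i, (y i + y j - 2 * m i) * f (y j - y i) = 0 :=
    G.sum_sum_neighborFinset_eq_zero (fun _ _ _ _ => Finset.mem_univ _) fun i j hij => by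
      rw [← neg_sub (y i), hf.eq, hm i j hij]
      ring
  rw [eq_neg_iff_add_eq_zero, dissipation, ← Finset.sum_add_distrib, ← hpair]
  refine Finset.sum_congr rfl fun i _ => ?_
  rw [consensusField, Finset.mul_sum, ← Finset.sum_add_distrib]
  exact Finset.sum_congr rfl fun j _ => by ring

lemma dissipation_nonneg (hf : Monotone f) (h0 : f 0 = 0) (y : V → ℝ) :
    0 ≤ G.dissipation f y :=
  Finset.sum_nonneg fun _ _ => Finset.sum_nonneg fun _ _ => mul_apply_nonneg_of_monotone hf h0 _

lemma eq_of_adj_of_dissipation_eq_zero (hf : StrictMono f) (h0 : f 0 = 0) {y : V → ℝ}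
    (hy : G.dissipation f y = 0) {i j : V} (hij : G.Adj i j) : y i = y j := by
  have hnonneg := mul_apply_nonneg_of_monotone hf.monotone h0
  have hi := (Finset.sum_eq_zero_iff_of_nonneg fun i _ =>
    Finset.sum_nonneg fun j _ => hnonneg (y j - y i)).1 hy i (Finset.mem_univ i)
  have hij := (Finset.sum_eq_zero_iff_of_nonneg fun j _ => hnonneg (y j - y i)).1 hi j
    ((mem_neighborFinset _ _ _).2 hij)
  linarith [eq_zero_of_mul_apply_eq_zero hf h0 hij]

lemma continuous_dissipation (hf : Continuous f) : Continuous (G.dissipation f) := by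
  unfold dissipation
  fun_prop

def IsConsensusSolution (f : ℝ → ℝ) (x : ℝ → V → ℝ) : Prop :=
  ∀ i, ∀ t ∈ Ici (0 : ℝ),
    HasDerivWithinAt (fun s => x s i) (G.consensusField f (x t) i) (Ici 0) t

variable {x : ℝ → V → ℝ}

lemma IsConsensusSolution.sum_eq_sum_zero (hx : G.IsConsensusSolution f x) (hf : f.Odd)
    {s : Finset V} (hs : ∀ i ∈ s, ∀ j, G.Adj i j → j ∈ s) {t : ℝ} (ht : 0 ≤ t) :
    ∑ j ∈ s, x t j = ∑ j ∈ s, x 0 j := by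
  have hS : ∀ u ∈ Ici (0 : ℝ), HasDerivWithinAt (fun r => ∑ j ∈ s, x r j) 0 (Ici 0) u :=
    fun u hu =>
      (HasDerivWithinAt.fun_sum (u := s) fun j _ => hx j u hu).congr_deriv
        (sum_consensusField_eq_zero hf hs _)
  exact constant_of_has_deriv_right_zero
    (fun u hu => (hS u hu.1).continuousWithinAt.mono Icc_subset_Ici_self)
    (fun u hu => (hS u hu.1).mono (Ici_subset_Ici.2 hu.1)) t ⟨ht, le_rfl⟩

lemma IsConsensusSolution.hasDerivWithinAt_sum_sq_sub (hx : G.IsConsensusSolution f x)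
    (hf : f.Odd) {m : V → ℝ} (hm : ∀ i j, G.Adj i j → m i = m j) {t : ℝ} (ht : t ∈ Ici 0) :
    HasDerivWithinAt (fun s => ∑ i, (x s i - m i) ^ 2) (-G.dissipation f (x t)) (Ici 0) t := by
  rw [← sum_mul_consensusField_eq_neg_dissipation hf hm]
  exact HasDerivWithinAt.fun_sum fun i _ =>
    (((hx i t ht).sub_const (m i)).pow 2).congr_deriv (by norm_num)

theorem IsConsensusSolution.tendsto_componentAverage [DecidableEq G.ConnectedComponent]
    (hx : G.IsConsensusSolution f x) (hf : f.Odd) (hmono : StrictMono f) (hcont : Continuous f) :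
    Tendsto x atTop (𝓝 (G.componentAverage (x 0))) := by
  set m := G.componentAverage (x 0) with hm_def
  have h0 : f 0 = 0 := hf.map_zero
  have hm : ∀ i j, G.Adj i j → m i = m j := fun i j => componentAverage_eq_of_adj (x 0)
  refine tendsto_of_sum_sq_sub_tendsto_zero <| tendsto_zero_of_hasDerivWithinAt_neg (x := x)
    (W := fun y => ∑ i, (y i - m i) ^ 2) (Q := G.dissipation f)
    (C := {y | ∀ i, ∑ j ∈ G.componentFinset i, y j = ∑ j ∈ G.componentFinset i, x 0 j})
    ?_ (fun t ht i => hx.sum_eq_sum_zero hf (fun j hj k => mem_componentFinset_of_adj hj) ht)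
    (by fun_prop) (continuous_dissipation hcont) (fun y => Finset.sum_nonneg fun i _ => sq_nonneg _)
    (fun c => ?_) (dissipation_nonneg hmono.monotone h0) (fun y hy hQ => ?_)
    (fun t ht => hx.hasDerivWithinAt_sum_sq_sub hf hm ht)
  · simp only [ofPred_forall]
    exact isClosed_iInter fun i => isClosed_eq (by fun_prop) continuous_const
  · exact (Metric.isBounded_closedBall (x := m) (r := √c)).subset fun y hy =>
      (dist_le_sqrt_sum_sq y m).trans (Real.sqrt_le_sqrt hy)
  · rw [eq_componentAverage (fun i j => eq_of_adj_of_dissipation_eq_zero hmono h0 hQ) hy, ← hm_def]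
    simp

end SimpleGraph

theorem stmt_9_general {V : Type} [Fintype V]
    (G : SimpleGraph V) [DecidableRel G.Adj] [DecidableEq G.ConnectedComponent]
    (f : ℝ → ℝ) (hodd : ∀ t : ℝ, f (-t) = -f t)
    (han : ∀ t : ℝ, AnalyticAt ℝ f t)
    (hmono : StrictMono f)
    (g : ℝ → ℝ) (hg : ∀ t : ℝ, HasDerivAt g (f t) t)
    (Eo : Finset (V × V)) :
    -- every global solution converges to the componentwise-average equilibrium
    (∀ x : ℝ → V → ℝ,
      (∀ (i : V), ∀ t ∈ Set.Ici (0 : ℝ), HasDerivWithinAt (fun s => x s i)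
          (∑ j ∈ G.neighborFinset i, f (x t j - x t i)) (Set.Ici (0 : ℝ)) t) →
      (∀ i : V, Tendsto (fun t => x t i) atTop
        (nhds ((∑ j ∈ Finset.univ.filter
              (fun j => G.connectedComponentMk j = G.connectedComponentMk i), x 0 j) /
            ((Finset.univ.filter
              (fun j => G.connectedComponentMk j = G.connectedComponentMk i)).card : ℝ)))) ∧
      (∀ i j : V, G.Adj i j →
        Tendsto (fun t => x t j - x t i) atTop (nhds (0 : ℝ)))) ∧
    -- the energy function is convex
    ConvexOn ℝ Set.univ (fun y : V → ℝ => ∑ e ∈ Eo, g (y e.2 - y e.1)) := by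
  have hgconv : ConvexOn ℝ univ g :=
    Monotone.convexOn_univ_of_deriv (fun t => (hg t).differentiableAt)
      (by rw [funext fun t => (hg t).deriv]; exact hmono.monotone)
  refine ⟨fun x hx => ?_, ConvexOn.sum convex_univ fun e _ => hgconv.comp_apply_sub_apply e.1 e.2⟩
  have hsol : G.IsConsensusSolution f x := hx
  have hlim := tendsto_pi_nhds.1 <| hsol.tendsto_componentAverage hodd hmono
    (AnalyticOnNhd.continuous fun t _ => han t)
  refine ⟨hlim, fun i j hij => ?_⟩
  simpa [G.componentAverage_eq_of_adj (x 0) hij] using (hlim j).sub (hlim i)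

/-- For a non-constant odd real-analytic increasing `f`, every global
solution `x : [0,∞) → ℝ^V` of `ẋ_i = ∑_{j ∈ N(i)} f(x_j − x_i)` converges as
`t → ∞` to the equilibrium which on each connected component `K` is constant with
value `(∑_{i ∈ K} x_i(0)) / |K|`; in particular `x_j(t) − x_i(t) → 0` on every edge.
Moreover the energy `E(x) = ∑_{(j,k) ∈ E} g(x_k − x_j)` (for `g` a primitive of `f`)
is convex. -/
theorem stmt_9 {V : Type} [Fintype V] [DecidableEq V]
    (G : SimpleGraph V) [DecidableRel G.Adj] [DecidableEq G.ConnectedComponent]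
    (f : ℝ → ℝ) (hodd : ∀ t : ℝ, f (-t) = -f t)
    (hnc : ∃ a b : ℝ, f a ≠ f b) (han : ∀ t : ℝ, AnalyticAt ℝ f t)
    (hmono : StrictMono f)
    (g : ℝ → ℝ) (hg : ∀ t : ℝ, HasDerivAt g (f t) t)
    (Eo : Finset (V × V)) (hor : IsOrientation G Eo) :
    -- every global solution converges to the componentwise-average equilibrium
    (∀ x : ℝ → V → ℝ,
      (∀ (i : V), ∀ t ∈ Set.Ici (0 : ℝ), HasDerivWithinAt (fun s => x s i)
          (∑ j ∈ G.neighborFinset i, f (x t j - x t i)) (Set.Ici (0 : ℝ)) t) →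
      (∀ i : V, Tendsto (fun t => x t i) atTop
        (nhds ((∑ j ∈ Finset.univ.filter
              (fun j => G.connectedComponentMk j = G.connectedComponentMk i), x 0 j) /
            ((Finset.univ.filter
              (fun j => G.connectedComponentMk j = G.connectedComponentMk i)).card : ℝ)))) ∧
      (∀ i j : V, G.Adj i j →
        Tendsto (fun t => x t j - x t i) atTop (nhds (0 : ℝ)))) ∧
    -- the energy function is convex
    ConvexOn ℝ Set.univ (fun y : V → ℝ => ∑ e ∈ Eo, g (y e.2 - y e.1)) :=
  stmt_9_general G f hodd han hmono g hg Eo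
end

section
/- Let G and H be finite graphs, let f : ℝ → ℝ be an odd function, and let φ : V(G) → V(H) be a generalized covering map. If y ∈ ℝ^{V(H)} is an equilibrium of the system on H, then the pullback x = φ*(y) ∈ ℝ^{V(G)} defined by x_i = y_{φ(i)} is an equilibrium of the system on G. Moreover φ* is injective, and if y and y′ are equilibria of H that differ by a vector constant on each connected component of H, then φ*(y) and φ*(y′) differ by a vector constant on each connected component of G. -/
/-- If `φ : V(G) → V(H)` is a generalized covering map (a surjection
such that, for each vertex `i`, the restriction of `φ` to `N_G(i) ∖ φ⁻¹({φ(i)})` is a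
well-defined `d_i`-to-one map onto `N_H(φ(i))` for some `d_i ≥ 1`) and `f` is odd,
then the pullback `x = φ*(y)`, `x_i = y_{φ(i)}`, of any equilibrium `y` of `H` is an
equilibrium of `G`; moreover `φ*` is injective, and if two equilibria of `H` differ
by a vector constant on each connected component of `H`, then their pullbacks differ
by a vector constant on each connected component of `G`. -/
theorem stmt_10 {VG VH : Type} [Fintype VG] [Fintype VH] [DecidableEq VG] [DecidableEq VH]
    (G : SimpleGraph VG) [DecidableRel G.Adj] (H : SimpleGraph VH) [DecidableRel H.Adj]
    (f : ℝ → ℝ) (hodd : ∀ t : ℝ, f (-t) = -f t)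
    (φ : VG → VH) (hsurj : Function.Surjective φ)
    (hwd : ∀ i j : VG, G.Adj i j → φ j ≠ φ i → H.Adj (φ i) (φ j))
    (hdeg : ∀ i : VG, ∃ d : ℕ, 1 ≤ d ∧ ∀ w ∈ H.neighborFinset (φ i),
      ((G.neighborFinset i).filter (fun j => φ j = w)).card = d) :
    -- pullbacks of equilibria are equilibria
    (∀ y : VH → ℝ, (∀ i : VH, ∑ j ∈ H.neighborFinset i, f (y j - y i) = 0) →
      ∀ i : VG, ∑ j ∈ G.neighborFinset i, f (y (φ j) - y (φ i)) = 0) ∧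
    -- the pullback map is injective
    (∀ y y' : VH → ℝ, (fun i : VG => y (φ i)) = (fun i : VG => y' (φ i)) → y = y') ∧
    -- pullback preserves equivalence up to translational symmetry
    (∀ y y' : VH → ℝ,
      (∀ i : VH, ∑ j ∈ H.neighborFinset i, f (y j - y i) = 0) →
      (∀ i : VH, ∑ j ∈ H.neighborFinset i, f (y' j - y' i) = 0) →
      (∀ i j : VH, H.connectedComponentMk i = H.connectedComponentMk j →
        y i - y' i = y j - y' j) →
      (∀ i j : VG, G.connectedComponentMk i = G.connectedComponentMk j →
        y (φ i) - y' (φ i) = y (φ j) - y' (φ j))) := by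
  have hf0 : f 0 = 0 := by have := hodd 0; simp at this; linarith
  refine ⟨?_, ?_, ?_⟩
  · intro y hy i
    obtain ⟨d, hd1, hd⟩ := hdeg i
    rw [← Finset.sum_filter_add_sum_filter_not (G.neighborFinset i)
      (fun j => φ j = φ i) (fun j => f (y (φ j) - y (φ i)))]
    have h1 : ∑ j ∈ (G.neighborFinset i).filter (fun j => φ j = φ i),
        f (y (φ j) - y (φ i)) = 0 := by
      apply Finset.sum_eq_zero
      intro j hj
      rw [Finset.mem_filter] at hj
      rw [hj.2]
      simpa using hf0
    have hmaps : ∀ j ∈ (G.neighborFinset i).filter (fun j => ¬ φ j = φ i),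
        φ j ∈ H.neighborFinset (φ i) := by
      intro j hj
      rw [Finset.mem_filter, SimpleGraph.mem_neighborFinset] at hj
      rw [SimpleGraph.mem_neighborFinset]
      exact hwd i j hj.1 hj.2
    have h2 : ∑ j ∈ (G.neighborFinset i).filter (fun j => ¬ φ j = φ i),
        f (y (φ j) - y (φ i)) = 0 := by
      rw [← Finset.sum_fiberwise_of_maps_to hmaps (fun j => f (y (φ j) - y (φ i)))]
      have key : ∀ w ∈ H.neighborFinset (φ i),
          ∑ j ∈ ((G.neighborFinset i).filter (fun j => ¬ φ j = φ i)).filter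
            (fun j => φ j = w), f (y (φ j) - y (φ i)) = d * f (y w - y (φ i)) := by
        intro w hw
        have hwne : w ≠ φ i := by
          rw [SimpleGraph.mem_neighborFinset] at hw
          exact fun h => (H.irrefl (h ▸ hw)).elim
        have hfe : ((G.neighborFinset i).filter (fun j => ¬ φ j = φ i)).filter
            (fun j => φ j = w) = (G.neighborFinset i).filter (fun j => φ j = w) := by
          ext j
          simp only [Finset.mem_filter, and_assoc]
          constructor
          · exact fun h => ⟨h.1, h.2.2⟩
          · exact fun h => ⟨h.1, fun h' => hwne ((h.2).symm.trans h'), h.2⟩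
        rw [hfe]
        have : ∀ j ∈ (G.neighborFinset i).filter (fun j => φ j = w),
            f (y (φ j) - y (φ i)) = f (y w - y (φ i)) := by
          intro j hj
          rw [Finset.mem_filter] at hj
          rw [hj.2]
        rw [Finset.sum_congr rfl this, Finset.sum_const, hd w hw, nsmul_eq_mul]
      rw [Finset.sum_congr rfl key, ← Finset.mul_sum, hy (φ i), mul_zero]
    rw [h1, h2, add_zero]
  · intro y y' h
    funext w
    obtain ⟨i, rfl⟩ := hsurj w
    exact congrFun h i
  · intro y y' _ _ hcomp i j hij
    obtain ⟨p⟩ := SimpleGraph.ConnectedComponent.exact hij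
    clear hij
    induction p with
    | nil => rfl
    | @cons a b c hadj q ih =>
      have step : y (φ a) - y' (φ a) = y (φ b) - y' (φ b) := by
        by_cases hab : φ b = φ a
        · rw [hab]
        · exact hcomp (φ a) (φ b)
            (SimpleGraph.ConnectedComponent.sound (hwd a b hadj hab).reachable)
      rw [step]
      exact ih
end

section
/- Let G be a finite graph with n vertices, m edges and c connected components, and let f : ℝ → ℝ be a non-constant, odd, real-analytic function. Then the topological dimension of the set of equilibria up to symmetry satisfies dim 𝓔(G,f) ≤ dim H₁(G) = m − n + c. -/
open Matrix

/-- `X` has Lebesgue covering dimension at most `n`: every open cover admits an open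
refinement in which every point lies in at most `n + 1` members. -/
def CoveringDimLE (X : Type) [TopologicalSpace X] (n : ℕ) : Prop :=
  ∀ (ι : Type) (U : ι → Set X), (∀ i, IsOpen (U i)) → (⋃ i, U i) = Set.univ →
    ∃ (κ : Type) (W : κ → Set X), (∀ k, IsOpen (W k)) ∧ (⋃ k, W k) = Set.univ ∧
      (∀ k, ∃ i, W k ⊆ U i) ∧
      (∀ x : X, {k | x ∈ W k}.Finite ∧ {k | x ∈ W k}.ncard ≤ n + 1)

/-- The Lebesgue covering (topological) dimension of `X`, valued in `ℕ∞`. -/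
noncomputable def coveringDim (X : Type) [TopologicalSpace X] : ℕ∞ :=
  sInf {d : ℕ∞ | ∃ n : ℕ, d = (n : ℕ∞) ∧ CoveringDimLE X n}

/-- The covering dimension of a subset of a topological space. -/
noncomputable def setCoveringDim {α : Type} [TopologicalSpace α] (S : Set α) : ℕ∞ :=
  coveringDim S

open Topology Set Function Module

section ZeroDim

variable {X Y : Type*} [TopologicalSpace X] [TopologicalSpace Y]

/-- Every point has arbitrarily small clopen neighborhoods. -/
def ClopenBase (X : Type*) [TopologicalSpace X] : Prop :=
  ∀ (x : X) (U : Set X), IsOpen U → x ∈ U → ∃ C : Set X, IsClopen C ∧ x ∈ C ∧ C ⊆ U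

/-- Zero-dimensionality: separation of disjoint closed sets by clopen sets. -/
def ZDim (X : Type*) [TopologicalSpace X] : Prop :=
  ∀ A B : Set X, IsClosed A → IsClosed B → Disjoint A B →
    ∃ C : Set X, IsClopen C ∧ A ⊆ C ∧ Disjoint C B

variable {X Y : Type*} [TopologicalSpace X] [TopologicalSpace Y]

lemma clopenBase_of_embedding {e : X → Y} (he : Topology.IsEmbedding e)
    (h : ClopenBase Y) : ClopenBase X := by
  intro x U hU hx
  obtain ⟨V, hV, hUV⟩ := he.isOpen_iff.mp hU
  obtain ⟨C, hC, heC, hCV⟩ := h (e x) V hV (by rw [← hUV] at hx; exact hx)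
  refine ⟨e ⁻¹' C, ⟨hC.1.preimage he.continuous, hC.2.preimage he.continuous⟩, heC, ?_⟩
  rw [← hUV]; exact fun a ha => hCV ha

lemma clopenBase_of_zdim [T1Space X] (h : ZDim X) : ClopenBase X := by
  intro x U hU hx
  obtain ⟨C, hC, hxC, hd⟩ := h {x} Uᶜ isClosed_singleton hU.isClosed_compl
    (by simp [Set.disjoint_left, hx])
  refine ⟨C, hC, hxC rfl, fun a ha => ?_⟩
  by_contra hn; exact (Set.disjoint_left.mp hd ha) hn

/-- Disjointification of a countable clopen family. -/
lemma disjointify {g : ℕ → Set X} (hg : ∀ n, IsClopen (g n)) :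
    ∃ D : ℕ → Set X, (∀ n, IsClopen (D n)) ∧ (∀ n, D n ⊆ g n) ∧
      Pairwise (Function.onFun Disjoint D) ∧ (⋃ n, D n) = ⋃ n, g n := by
  classical
  have hcl : ∀ n, IsClopen (⋃ i ∈ Finset.range n, g i) := fun n =>
    isClopen_biUnion_finset (fun i _ => hg i)
  refine ⟨fun n => g n \ ⋃ i ∈ Finset.range n, g i, fun n => (hg n).diff (hcl n),
    fun n => diff_subset, ?_, ?_⟩
  · have key : ∀ a b : ℕ, a < b →
        Disjoint (g a \ ⋃ i ∈ Finset.range a, g i) (g b \ ⋃ i ∈ Finset.range b, g i) := by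
      intro a b h
      refine Set.disjoint_right.mpr fun x hx hx' => hx.2 ?_
      exact Set.mem_biUnion (Finset.mem_range.mpr h) hx'.1
    intro a b hab
    rcases lt_or_gt_of_ne hab with h | h
    · exact key a b h
    · exact (key b a h).symm
  · apply Set.Subset.antisymm (Set.iUnion_mono fun n => diff_subset)
    intro x hx
    rw [Set.mem_iUnion] at hx ⊢
    have hex : ∃ n, x ∈ g n := hx
    refine ⟨Nat.find hex, Nat.find_spec hex, ?_⟩
    simp only [Set.mem_iUnion, Finset.mem_range, exists_prop, not_exists, not_and]
    intro i hi hxi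
    exact Nat.find_min hex hi hxi

lemma zdim_of_clopenBase [SecondCountableTopology X] (h : ClopenBase X) : ZDim X := by
  intro A B hA hB hAB
  classical
  -- family of clopen sets disjoint from A or from B
  let ι' := {C : Set X // IsClopen C ∧ (Disjoint C A ∨ Disjoint C B)}
  have hcov : (⋃ i : ι', (i : Set X)) = univ := by
    apply Set.eq_univ_of_forall
    intro x
    by_cases hxA : x ∈ A
    · have hxB : x ∈ Bᶜ := fun hxB => (Set.disjoint_left.mp hAB hxA) hxB
      obtain ⟨C, hC, hxC, hCB⟩ := h x Bᶜ hB.isOpen_compl hxB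
      exact Set.mem_iUnion.mpr ⟨⟨C, hC, Or.inr (Set.disjoint_left.mpr fun a ha hb => hCB ha hb)⟩, hxC⟩
    · obtain ⟨C, hC, hxC, hCA⟩ := h x Aᶜ hA.isOpen_compl hxA
      exact Set.mem_iUnion.mpr ⟨⟨C, hC, Or.inl (Set.disjoint_left.mpr fun a ha hb => hCA ha hb)⟩, hxC⟩
  obtain ⟨T, hTc, hTu⟩ := TopologicalSpace.isOpen_iUnion_countable
    (fun i : ι' => (i : Set X)) (fun i => i.2.1.2)
  rw [hcov] at hTu
  rcases T.eq_empty_or_nonempty with hTe | hTne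
  · -- X is empty
    have hXe : (univ : Set X) = ∅ := by
      rw [← hTu, hTe]; simp
    refine ⟨∅, isClopen_empty, ?_, disjoint_bot_left⟩
    rw [← Set.subset_empty_iff] at hXe
    exact fun a ha => hXe (mem_univ a)
  · obtain ⟨φ, hφ⟩ := (Set.countable_iff_exists_surjective hTne).mp hTc
    let g : ℕ → Set X := fun n => ((φ n : ι') : Set X)
    have hgc : ∀ n, IsClopen (g n) := fun n => (φ n : ι').2.1
    have hgp : ∀ n, Disjoint (g n) A ∨ Disjoint (g n) B := fun n => (φ n : ι').2.2
    have hgu : (⋃ n, g n) = univ := by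
      apply Set.eq_univ_of_forall
      intro x
      have : x ∈ ⋃ i ∈ T, (i : Set X) := hTu ▸ mem_univ x
      rw [Set.mem_iUnion₂] at this
      obtain ⟨i, hiT, hxi⟩ := this
      obtain ⟨n, hn⟩ := hφ ⟨i, hiT⟩
      exact Set.mem_iUnion.mpr ⟨n, by simp only [g, hn]; exact hxi⟩
    obtain ⟨D, hDc, hDg, hDd, hDu⟩ := disjointify hgc
    rw [hgu] at hDu
    refine ⟨⋃ n, if Disjoint (g n) B then D n else ∅, ?_, ?_, ?_⟩
    · constructor
      · -- closed : complement is the union of the other pieces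
        have hcompl : (⋃ n, if Disjoint (g n) B then D n else ∅)ᶜ
            = ⋃ n, if Disjoint (g n) B then (∅ : Set X) else D n := by
          apply Set.Subset.antisymm
          · intro x hx
            have hxu : x ∈ ⋃ n, D n := hDu ▸ mem_univ x
            obtain ⟨m, hm⟩ := Set.mem_iUnion.mp hxu
            by_cases hc : Disjoint (g m) B
            · exact absurd (Set.mem_iUnion.mpr ⟨m, by simp [hc, hm]⟩) hx
            · exact Set.mem_iUnion.mpr ⟨m, by simp [hc, hm]⟩
          · intro x hx hx'
            obtain ⟨m, hm⟩ := Set.mem_iUnion.mp hx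
            obtain ⟨k, hk⟩ := Set.mem_iUnion.mp hx'
            by_cases hcm : Disjoint (g m) B
            · simp [hcm] at hm
            · simp [hcm] at hm
              by_cases hck : Disjoint (g k) B
              · simp [hck] at hk
                have hkm : k ≠ m := fun he => hcm (he ▸ hck)
                exact Set.disjoint_left.mp (hDd hkm) hk hm
              · simp [hck] at hk
        rw [← isOpen_compl_iff, hcompl]
        exact isOpen_iUnion fun n => by
          by_cases hc : Disjoint (g n) B <;> simp [hc, (hDc n).2, isOpen_empty]
      · exact isOpen_iUnion fun n => by
          by_cases hc : Disjoint (g n) B <;> simp [hc, (hDc n).2, isOpen_empty]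
    · -- A ⊆ C
      intro x hxA
      have hxu : x ∈ ⋃ n, D n := hDu ▸ mem_univ x
      obtain ⟨m, hm⟩ := Set.mem_iUnion.mp hxu
      have hnd : ¬ Disjoint (g m) A := fun hd => (Set.disjoint_left.mp hd (hDg m hm)) hxA
      have hc : Disjoint (g m) B := (hgp m).resolve_left hnd
      exact Set.mem_iUnion.mpr ⟨m, by simp [hc, hm]⟩
    · -- Disjoint C B
      rw [Set.disjoint_left]
      intro x hx hxB
      obtain ⟨m, hm⟩ := Set.mem_iUnion.mp hx
      by_cases hc : Disjoint (g m) B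
      · simp [hc] at hm
        exact Set.disjoint_left.mp hc (hDg m hm) hxB
      · simp [hc] at hm


/-- Countable closed sum theorem for zero-dimensionality. -/
lemma zdim_iUnion [NormalSpace X] (F : ℕ → Set X) (hFc : ∀ n, IsClosed (F n))
    (hFu : (⋃ n, F n) = univ) (hFz : ∀ n, ZDim ↥(F n)) : ZDim X := by
  classical
  have step : ∀ A' B' Fs : Set X, IsClosed A' → IsClosed B' → Disjoint A' B' →
      IsClosed Fs → ZDim ↥Fs →
      ∃ p : Set X × Set X, IsOpen p.1 ∧ IsOpen p.2 ∧ A' ⊆ p.1 ∧ B' ⊆ p.2 ∧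
        Disjoint (closure p.1) (closure p.2) ∧ Fs ⊆ p.1 ∪ p.2 := by
    intro A' B' Fs hA hB hAB hFs hz
    obtain ⟨Cf, hCf, hACf, hCfB⟩ := hz (Subtype.val ⁻¹' A') (Subtype.val ⁻¹' B')
      (hA.preimage continuous_subtype_val) (hB.preimage continuous_subtype_val)
      (hAB.preimage _)
    have hval := hFs.isClosedEmbedding_subtypeVal
    set C : Set X := Subtype.val '' Cf with hCdef
    set D : Set X := Subtype.val '' Cfᶜ with hDdef
    have hCc : IsClosed C := hval.isClosedMap _ hCf.1
    have hDc : IsClosed D := hval.isClosedMap _ hCf.2.isClosed_compl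
    have hd1 : Disjoint (A' ∪ C) (B' ∪ D) := by
      rw [Set.disjoint_left]
      rintro x (hxA | hxC) hx2
      · rcases hx2 with hxB | hxD
        · exact Set.disjoint_left.mp hAB hxA hxB
        · obtain ⟨a, ha, rfl⟩ := hxD
          exact ha (hACf hxA)
      · obtain ⟨a, ha, rfl⟩ := hxC
        rcases hx2 with hxB | hxD
        · exact Set.disjoint_left.mp hCfB ha hxB
        · obtain ⟨a', ha', he⟩ := hxD
          have : a' = a := Subtype.val_injective he
          exact ha' (this ▸ ha)
    obtain ⟨G, hGo, hGs, hGcl⟩ := normal_exists_closure_subset (hA.union hCc)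
      (hB.union hDc).isOpen_compl (Set.subset_compl_iff_disjoint_right.mpr hd1)
    obtain ⟨H, hHo, hHs, hHcl⟩ := normal_exists_closure_subset (hB.union hDc)
      isClosed_closure.isOpen_compl
      (Set.subset_compl_iff_disjoint_right.mpr (by
        rw [Set.disjoint_left]
        intro x hx hx'
        exact (Set.subset_compl_iff_disjoint_right.mp hGcl).le_bot ⟨hx', hx⟩))
    refine ⟨(G, H), hGo, hHo, fun x hx => hGs (Or.inl hx), fun x hx => hHs (Or.inl hx), ?_, ?_⟩
    · exact Set.disjoint_left.mpr fun x hx hx' => absurd hx (hHcl hx')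
    · intro x hx
      by_cases hc : (⟨x, hx⟩ : ↥Fs) ∈ Cf
      · exact Or.inl (hGs (Or.inr ⟨⟨x, hx⟩, hc, rfl⟩))
      · exact Or.inr (hHs (Or.inr ⟨⟨x, hx⟩, hc, rfl⟩))
  intro A B hA hB hAB
  choose st hst using step
  let T := {p : Set X × Set X // IsOpen p.1 ∧ IsOpen p.2 ∧ Disjoint (closure p.1) (closure p.2)}
  let base : T := by
    refine ⟨st A B (F 0) hA hB hAB (hFc 0) (hFz 0), ?_, ?_, ?_⟩
    · exact (hst A B (F 0) hA hB hAB (hFc 0) (hFz 0)).1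
    · exact (hst A B (F 0) hA hB hAB (hFc 0) (hFz 0)).2.1
    · exact (hst A B (F 0) hA hB hAB (hFc 0) (hFz 0)).2.2.2.2.1
  let stepf : (n : ℕ) → T → T := fun n prev => by
    refine ⟨st (closure prev.1.1) (closure prev.1.2) (F (n+1)) isClosed_closure
      isClosed_closure prev.2.2.2 (hFc (n+1)) (hFz (n+1)), ?_, ?_, ?_⟩
    · exact (hst _ _ _ _ _ _ _ _).1
    · exact (hst _ _ _ _ _ _ _ _).2.1
    · exact (hst _ _ _ _ _ _ _ _).2.2.2.2.1
  let seq : ℕ → T := fun n => Nat.rec base stepf n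
  have hseqS : ∀ n, seq (n+1) = stepf n (seq n) := fun n => rfl
  have h0A : A ⊆ (seq 0).1.1 := (hst A B (F 0) hA hB hAB (hFc 0) (hFz 0)).2.2.1
  have h0B : B ⊆ (seq 0).1.2 := (hst A B (F 0) hA hB hAB (hFc 0) (hFz 0)).2.2.2.1
  have hcov : ∀ n, F n ⊆ (seq n).1.1 ∪ (seq n).1.2 := by
    intro n
    cases n with
    | zero => exact (hst A B (F 0) hA hB hAB (hFc 0) (hFz 0)).2.2.2.2.2
    | succ m => exact (hst _ _ _ _ _ _ _ _).2.2.2.2.2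
  have hmono1 : ∀ n, (seq n).1.1 ⊆ (seq (n+1)).1.1 := by
    intro n
    exact subset_trans subset_closure (hst _ _ _ _ _ _ _ _).2.2.1
  have hmono2 : ∀ n, (seq n).1.2 ⊆ (seq (n+1)).1.2 := by
    intro n
    exact subset_trans subset_closure (hst _ _ _ _ _ _ _ _).2.2.2.1
  have hmono1' : ∀ m n, m ≤ n → (seq m).1.1 ⊆ (seq n).1.1 := by
    intro m n h
    induction h with
    | refl => exact subset_rfl
    | step h ih => exact subset_trans ih (hmono1 _)
  have hmono2' : ∀ m n, m ≤ n → (seq m).1.2 ⊆ (seq n).1.2 := by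
    intro m n h
    induction h with
    | refl => exact subset_rfl
    | step h ih => exact subset_trans ih (hmono2 _)
  set G : Set X := ⋃ n, (seq n).1.1 with hGdef
  set H : Set X := ⋃ n, (seq n).1.2 with hHdef
  have hdisj : Disjoint G H := by
    rw [Set.disjoint_left]
    intro x hx hx'
    obtain ⟨j, hj⟩ := Set.mem_iUnion.mp hx
    obtain ⟨k, hk⟩ := Set.mem_iUnion.mp hx'
    rcases le_total j k with h | h
    · exact ((seq k).2.2.2).le_bot ⟨subset_closure (hmono1' j k h hj), subset_closure hk⟩
    · exact ((seq j).2.2.2).le_bot ⟨subset_closure hj, subset_closure (hmono2' k j h hk)⟩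
  have huniv : G ∪ H = univ := by
    apply Set.eq_univ_of_forall
    intro x
    have : x ∈ ⋃ n, F n := hFu ▸ mem_univ x
    obtain ⟨n, hn⟩ := Set.mem_iUnion.mp this
    rcases hcov n hn with h | h
    · exact Or.inl (Set.mem_iUnion.mpr ⟨n, h⟩)
    · exact Or.inr (Set.mem_iUnion.mpr ⟨n, h⟩)
  refine ⟨G, ⟨?_, isOpen_iUnion fun n => (seq n).2.1⟩, ?_, ?_⟩
  · have : G = Hᶜ := by
      apply Set.Subset.antisymm
      · exact Set.subset_compl_iff_disjoint_right.mpr hdisj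
      · intro x hx
        rcases (huniv ▸ mem_univ x : x ∈ G ∪ H) with h | h
        · exact h
        · exact absurd h hx
    rw [this]
    exact (isOpen_iUnion fun n => (seq n).2.2.1).isClosed_compl
  · exact fun x hx => Set.mem_iUnion.mpr ⟨0, h0A hx⟩
  · exact Set.disjoint_left.mpr fun x hx hxB =>
      Set.disjoint_left.mp hdisj hx (Set.mem_iUnion.mpr ⟨0, h0B hxB⟩)


end ZeroDim

section Ref
variable {X : Type*} [TopologicalSpace X]

/-- From a clopen base, every open cover has a countable disjoint open refinement. -/
lemma clopenBase_refinement [SecondCountableTopology X] (h : ClopenBase X)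
    {ι : Type} [Nonempty ι] (U : ι → Set X) (hU : ∀ i, IsOpen (U i))
    (hUc : (⋃ i, U i) = univ) :
    ∃ W : ℕ → Set X, (∀ n, IsOpen (W n)) ∧ (⋃ n, W n) = univ ∧
      (∀ n, ∃ i, W n ⊆ U i) ∧ Pairwise (Function.onFun Disjoint W) := by
  classical
  let ι' := {C : Set X // IsClopen C ∧ ∃ i, C ⊆ U i}
  have hcov : (⋃ i : ι', (i : Set X)) = univ := by
    apply Set.eq_univ_of_forall
    intro x
    have : x ∈ ⋃ i, U i := hUc ▸ mem_univ x
    obtain ⟨i, hi⟩ := Set.mem_iUnion.mp this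
    obtain ⟨C, hC, hxC, hCU⟩ := h x (U i) (hU i) hi
    exact Set.mem_iUnion.mpr ⟨⟨C, hC, i, hCU⟩, hxC⟩
  obtain ⟨T, hTc, hTu⟩ := TopologicalSpace.isOpen_iUnion_countable
    (fun i : ι' => (i : Set X)) (fun i => i.2.1.2)
  rw [hcov] at hTu
  rcases T.eq_empty_or_nonempty with hTe | hTne
  · refine ⟨fun _ => ∅, fun _ => isOpen_empty, ?_, fun n => ⟨Classical.arbitrary ι, empty_subset _⟩,
      fun a b hab => disjoint_bot_left⟩
    have hXe : (univ : Set X) = ∅ := by rw [← hTu, hTe]; simp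
    rw [hXe]; simp
  · obtain ⟨φ, hφ⟩ := (Set.countable_iff_exists_surjective hTne).mp hTc
    let g : ℕ → Set X := fun n => ((φ n : ι') : Set X)
    have hgc : ∀ n, IsClopen (g n) := fun n => (φ n : ι').2.1
    have hgu : (⋃ n, g n) = univ := by
      apply Set.eq_univ_of_forall
      intro x
      have : x ∈ ⋃ i ∈ T, (i : Set X) := hTu ▸ mem_univ x
      rw [Set.mem_iUnion₂] at this
      obtain ⟨i, hiT, hxi⟩ := this
      obtain ⟨n, hn⟩ := hφ ⟨i, hiT⟩
      exact Set.mem_iUnion.mpr ⟨n, by simp only [g, hn]; exact hxi⟩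
    obtain ⟨D, hDc, hDg, hDd, hDu⟩ := disjointify hgc
    exact ⟨D, fun n => (hDc n).2, by rw [hDu, hgu], fun n => by
      obtain ⟨i, hi⟩ := (φ n : ι').2.2
      exact ⟨i, subset_trans (hDg n) hi⟩, hDd⟩

/-- Expansion of a disjoint relatively-open family to a disjoint open family, in a
metric space. -/
lemma expansion {X : Type*} [MetricSpace X] {T : Set X} {κ : Type*} (V : κ → Set X)
    (hVT : ∀ k, V k ⊆ T) (O : κ → Set X) (hOo : ∀ k, IsOpen (O k))
    (hVO : ∀ k, V k = O k ∩ T)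
    (hdisj : Pairwise (Function.onFun Disjoint V)) (U' : κ → Set X)
    (hU'o : ∀ k, IsOpen (U' k)) (hVU : ∀ k, V k ⊆ U' k) :
    ∃ G : κ → Set X, (∀ k, IsOpen (G k)) ∧ (∀ k, V k ⊆ G k) ∧ (∀ k, G k ⊆ U' k) ∧
      Pairwise (Function.onFun Disjoint G) := by
  classical
  have hball : ∀ (k : κ) (x : X), x ∈ V k → ∃ ρ > 0,
      Metric.ball x ρ ⊆ O k ∧ Metric.ball x ρ ⊆ U' k := by
    intro k x hx
    obtain ⟨ρ1, hρ1, hb1⟩ := Metric.isOpen_iff.mp (hOo k) x ((hVO k ▸ hx).1)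
    obtain ⟨ρ2, hρ2, hb2⟩ := Metric.isOpen_iff.mp (hU'o k) x (hVU k hx)
    exact ⟨min ρ1 ρ2, lt_min hρ1 hρ2,
      subset_trans (Metric.ball_subset_ball (min_le_left _ _)) hb1,
      subset_trans (Metric.ball_subset_ball (min_le_right _ _)) hb2⟩
  choose ρ hρpos hρO hρU using hball
  refine ⟨fun k => ⋃ (x : X) (h : x ∈ V k), Metric.ball x (ρ k x h / 2),
    fun k => isOpen_iUnion fun x => isOpen_iUnion fun h => Metric.isOpen_ball, ?_, ?_, ?_⟩
  · intro k x hx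
    exact Set.mem_iUnion.mpr ⟨x, Set.mem_iUnion.mpr ⟨hx, by
      simp [Metric.mem_ball, half_pos (hρpos k x hx)]⟩⟩
  · intro k z hz
    obtain ⟨x, hx⟩ := Set.mem_iUnion.mp hz
    obtain ⟨hxV, hzb⟩ := Set.mem_iUnion.mp hx
    exact hρU k x hxV (Metric.ball_subset_ball (by linarith [hρpos k x hxV]) hzb)
  · have key : ∀ (k l : κ) (x y z : X) (hx : x ∈ V k) (hy : y ∈ V l), k ≠ l →
        ρ l y hy ≤ ρ k x hx → z ∈ Metric.ball x (ρ k x hx / 2) →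
        z ∈ Metric.ball y (ρ l y hy / 2) → False := by
      intro k l x y z hx hy hkl hle hz1 hz2
      have hxy : dist x y < ρ k x hx := by
        have := Metric.mem_ball.mp hz1
        have := Metric.mem_ball.mp hz2
        have : dist x y ≤ dist z x + dist z y := dist_triangle_left x y z
        rw [Metric.mem_ball] at hz1 hz2
        linarith
      have hyO : y ∈ O k := hρO k x hx (by rw [Metric.mem_ball, dist_comm]; exact hxy)
      have hyV : y ∈ V k := by rw [hVO k]; exact ⟨hyO, hVT l hy⟩
      exact Set.disjoint_left.mp (hdisj hkl) hyV hy
    intro k l hkl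
    rw [Function.onFun, Set.disjoint_left]
    intro z hz hz'
    obtain ⟨x, hx⟩ := Set.mem_iUnion.mp hz
    obtain ⟨hxV, hzb⟩ := Set.mem_iUnion.mp hx
    obtain ⟨y, hy⟩ := Set.mem_iUnion.mp hz'
    obtain ⟨hyV, hzb'⟩ := Set.mem_iUnion.mp hy
    rcases le_total (ρ l y hyV) (ρ k x hxV) with h | h
    · exact key k l x y z hxV hyV hkl h hzb hzb'
    · exact key l k y x z hyV hxV hkl.symm h hzb' hzb

end Ref

section Rat

variable {d : ℕ}

/-- The set of vectors with fixed rational values on `J` and irrational values off `J`. -/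
def ratPiece (d : ℕ) (J : Finset (Fin d)) (q : Fin d → ℚ) : Set (Fin d → ℝ) :=
  {x | (∀ k ∈ J, x k = (q k : ℝ)) ∧ (∀ k ∉ J, Irrational (x k))}

lemma clopenBase_ratPiece (J : Finset (Fin d)) (q : Fin d → ℚ) :
    ClopenBase ↥(ratPiece d J q) := by
  classical
  rintro ⟨x, hx⟩ U hU hxU
  obtain ⟨O, hO, rfl⟩ := isOpen_induced_iff.mp hU
  obtain ⟨ε, hε, hball⟩ := Metric.isOpen_iff.mp hO x hxU
  have hab : ∀ k : Fin d, ∃ a b : ℚ, x k - ε/2 < a ∧ (a:ℝ) < x k ∧ (x k : ℝ) < b ∧ (b:ℝ) < x k + ε/2 := by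
    intro k
    obtain ⟨a, ha⟩ := exists_rat_btwn (show x k - ε/2 < x k by linarith)
    obtain ⟨b, hb⟩ := exists_rat_btwn (show x k < x k + ε/2 by linarith)
    exact ⟨a, b, ha.1, ha.2, hb.1, hb.2⟩
  choose a b ha1 ha2 hb1 hb2 using hab
  refine ⟨Subtype.val ⁻¹' {y | ∀ k ∉ J, (a k : ℝ) < y k ∧ y k < (b k : ℝ)}, ⟨?_, ?_⟩, ?_, ?_⟩
  · -- closed
    have heq : (Subtype.val ⁻¹' {y : Fin d → ℝ | ∀ k ∉ J, (a k : ℝ) < y k ∧ y k < (b k : ℝ)} :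
        Set ↥(ratPiece d J q)) =
        Subtype.val ⁻¹' {y : Fin d → ℝ | ∀ k ∉ J, (a k : ℝ) ≤ y k ∧ y k ≤ (b k : ℝ)} := by
      ext ⟨y, hy⟩
      simp only [Set.mem_preimage, Set.mem_setOf_eq]
      constructor
      · exact fun h k hk => ⟨(h k hk).1.le, (h k hk).2.le⟩
      · intro h k hk
        have hirr := hy.2 k hk
        exact ⟨lt_of_le_of_ne (h k hk).1 (Ne.symm (hirr.ne_rat (a k))),
          lt_of_le_of_ne (h k hk).2 (hirr.ne_rat (b k))⟩
    rw [heq]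
    apply IsClosed.preimage continuous_subtype_val
    have : {y : Fin d → ℝ | ∀ k ∉ J, (a k : ℝ) ≤ y k ∧ y k ≤ (b k : ℝ)} =
        ⋂ k ∈ (Jᶜ : Finset (Fin d)), {y | (a k : ℝ) ≤ y k ∧ y k ≤ (b k : ℝ)} := by
      ext y; simp [Finset.mem_compl]
    rw [this]
    refine isClosed_biInter fun k _ => IsClosed.inter ?_ ?_
    · exact isClosed_le continuous_const (continuous_apply k)
    · exact isClosed_le (continuous_apply k) continuous_const
  · -- open
    apply IsOpen.preimage continuous_subtype_val
    have : {y : Fin d → ℝ | ∀ k ∉ J, (a k : ℝ) < y k ∧ y k < (b k : ℝ)} =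
        ⋂ k ∈ (Jᶜ : Finset (Fin d)), {y | (a k : ℝ) < y k ∧ y k < (b k : ℝ)} := by
      ext y; simp [Finset.mem_compl]
    rw [this]
    refine isOpen_biInter_finset fun k _ => IsOpen.inter ?_ ?_
    · exact isOpen_lt continuous_const (continuous_apply k)
    · exact isOpen_lt (continuous_apply k) continuous_const
  · exact fun k _ => ⟨ha2 k, hb1 k⟩
  · rintro ⟨y, hy⟩ hyC
    simp only [Set.mem_preimage, Set.mem_setOf_eq] at hyC ⊢
    apply hball
    rw [Metric.mem_ball]
    rw [dist_pi_lt_iff hε]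
    intro k
    rw [Real.dist_eq, abs_sub_lt_iff]
    by_cases hk : k ∈ J
    · have h1 : y k = (q k : ℝ) := hy.1 k hk
      have h2 : x k = (q k : ℝ) := hx.1 k hk
      rw [h1, h2]; constructor <;> linarith
    · have := hyC k hk
      have h1 := ha1 k; have h2 := ha2 k; have h3 := hb1 k; have h4 := hb2 k
      constructor <;> linarith [this.1, this.2]

/-- The set of vectors with exactly `i` rational coordinates. -/
def ratCount (d : ℕ) (i : ℕ) : Set (Fin d → ℝ) :=
  {x | Set.ncard {k | ¬ Irrational (x k)} = i}

lemma ratPiece_subset_ratCount {J : Finset (Fin d)} {q : Fin d → ℚ} :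
    ratPiece d J q ⊆ ratCount d J.card := by
  intro x hx
  have : {k | ¬ Irrational (x k)} = (J : Set (Fin d)) := by
    ext k
    simp only [Set.mem_setOf_eq, Finset.coe_mem, SetLike.mem_coe, Finset.mem_coe]
    constructor
    · intro h
      by_contra hk
      exact h (hx.2 k hk)
    · intro hk
      rw [hx.1 k hk]
      exact Rat.not_irrational (q k)
  simp only [ratCount, Set.mem_setOf_eq, this, Set.ncard_coe_finset]

lemma zdim_ratCount (i : ℕ) : ZDim ↥(ratCount d i) := by
  classical
  have hne : Nonempty (Finset (Fin d) × (Fin d → ℚ)) := ⟨⟨∅, 0⟩⟩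
  obtain ⟨e, he⟩ := exists_surjective_nat (Finset (Fin d) × (Fin d → ℚ))
  set M := ratCount d i
  refine zdim_iUnion (X := ↥M)
    (fun n => Subtype.val ⁻¹' (ratPiece d (e n).1 (e n).2)) ?_ ?_ ?_
  · -- closed
    intro n
    by_cases hcard : (e n).1.card = i
    · have : (Subtype.val ⁻¹' (ratPiece d (e n).1 (e n).2) : Set ↥M) =
          Subtype.val ⁻¹' {x | ∀ k ∈ (e n).1, x k = ((e n).2 k : ℝ)} := by
        ext ⟨x, hxM⟩
        simp only [Set.mem_preimage, Set.mem_setOf_eq]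
        constructor
        · exact fun h => h.1
        · intro h
          refine ⟨h, fun k hk => ?_⟩
          by_contra hirr
          -- x has rationals at all of (e n).1 plus k, contradicting count i
          have hsub : insert k ((e n).1 : Set (Fin d)) ⊆ {k' | ¬ Irrational (x k')} := by
            rintro k' (rfl | hk')
            · exact hirr
            · simp only [Set.mem_setOf_eq]
              rw [h k' (Finset.mem_coe.mp hk')]
              exact Rat.not_irrational _
          have hfin : {k' : Fin d | ¬ Irrational (x k')}.Finite := Set.toFinite _
          have hle : (insert k ((e n).1 : Set (Fin d))).ncard ≤ i := by
            rw [← hxM]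
            exact Set.ncard_le_ncard hsub hfin
          rw [Set.ncard_insert_of_notMem (by simpa using hk) (by exact Set.toFinite _),
            Set.ncard_coe_finset, hcard] at hle
          omega
      show IsClosed (Subtype.val ⁻¹' ratPiece d (e n).1 (e n).2 : Set ↥M)
      rw [this]
      refine IsClosed.preimage continuous_subtype_val ?_
      have : {x : Fin d → ℝ | ∀ k ∈ (e n).1, x k = ((e n).2 k : ℝ)} =
          ⋂ k ∈ (e n).1, {x | x k = ((e n).2 k : ℝ)} := by ext x; simp
      rw [this]
      exact isClosed_biInter fun k _ => isClosed_eq (continuous_apply k) continuous_const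
    · have : (Subtype.val ⁻¹' (ratPiece d (e n).1 (e n).2) : Set ↥M) = ∅ := by
        ext ⟨x, hxM⟩
        simp only [Set.mem_preimage, Set.mem_empty_iff_false, iff_false]
        intro hx
        have h1 : Set.ncard {k | ¬ Irrational (x k)} = (e n).1.card := ratPiece_subset_ratCount hx
        have h2 : Set.ncard {k | ¬ Irrational (x k)} = i := hxM
        exact hcard (h1.symm.trans h2)
      show IsClosed (Subtype.val ⁻¹' ratPiece d (e n).1 (e n).2 : Set ↥M)
      rw [this]; exact isClosed_empty
  · -- union
    apply Set.eq_univ_of_forall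
    rintro ⟨x, hxM⟩
    set J : Finset (Fin d) := {k | ¬ Irrational (x k)}.toFinset with hJ
    have hq : ∀ k : Fin d, ∃ qq : ℚ, k ∈ J → x k = (qq : ℝ) := by
      intro k
      by_cases hk : k ∈ J
      · have : ¬ Irrational (x k) := by
          rw [hJ] at hk; simpa using hk
        rw [Irrational] at this
        push_neg at this
        obtain ⟨qq, hqq⟩ := this
        exact ⟨qq, fun _ => hqq.symm⟩
      · exact ⟨0, fun h => absurd h hk⟩
    choose q hqs using hq
    obtain ⟨n, hn⟩ := he ⟨J, q⟩
    refine Set.mem_iUnion.mpr ⟨n, ?_⟩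
    simp only [Set.mem_preimage, hn]
    refine ⟨fun k hk => hqs k hk, fun k hk => ?_⟩
    rw [hJ] at hk
    simpa using hk
  · -- each piece is zero-dimensional
    intro n
    apply zdim_of_clopenBase
    apply clopenBase_of_embedding (Y := ↥(ratPiece d (e n).1 (e n).2))
      (e := fun a => ⟨a.1.1, a.2⟩)
    · have h1 : Topology.IsEmbedding
          (fun a : ↥(Subtype.val ⁻¹' (ratPiece d (e n).1 (e n).2) : Set ↥M) => a.1.1) :=
        Topology.IsEmbedding.subtypeVal.comp Topology.IsEmbedding.subtypeVal
      exact Topology.IsEmbedding.of_comp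
        (Continuous.subtype_mk (continuous_subtype_val.comp continuous_subtype_val) _)
        continuous_subtype_val h1
    · exact clopenBase_ratPiece _ _

end Rat

section Ana

/-- A set of isolated points in ℝ is countable. -/
lemma countable_of_isolated {s : Set ℝ}
    (h : ∀ x ∈ s, ∃ ε > 0, ∀ y ∈ s, |y - x| < ε → y = x) : s.Countable := by
  have key : ∀ x ∈ s, ∃ p : ℚ × ℚ, x ∈ Set.Ioo (p.1 : ℝ) p.2 ∧
      ∀ y ∈ s, y ∈ Set.Ioo (p.1 : ℝ) p.2 → y = x := by
    intro x hx
    obtain ⟨ε, hε, hiso⟩ := h x hx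
    obtain ⟨q1, hq1⟩ := exists_rat_btwn (show x - ε < x by linarith)
    obtain ⟨q2, hq2⟩ := exists_rat_btwn (show x < x + ε by linarith)
    refine ⟨(q1, q2), ⟨hq1.2, hq2.1⟩, fun y hy hmem => hiso y hy ?_⟩
    simp only [Set.mem_Ioo] at hmem
    rw [abs_sub_lt_iff]
    constructor <;> nlinarith [hmem.1, hmem.2, hq1.1, hq1.2, hq2.1, hq2.2]
  choose! p hp1 hp2 using key
  have hinj : Set.InjOn p s := fun a ha b hb hab =>
    (hp2 b hb a ha (hab ▸ hp1 a ha))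
  exact (Set.mapsTo_univ p s).countable_of_injOn hinj Set.countable_univ

variable {f : ℝ → ℝ}

/-- The zero set of the derivative of a non-constant analytic function is countable. -/
lemma countable_critical (han : ∀ t : ℝ, AnalyticAt ℝ f t) (hnc : ∃ a b : ℝ, f a ≠ f b) :
    {t : ℝ | deriv f t = 0}.Countable := by
  have hg : ∀ t, AnalyticAt ℝ (deriv f) t := by
    have : AnalyticOnNhd ℝ f Set.univ := fun x _ => han x
    exact fun t => this.deriv t (Set.mem_univ t)
  have hgne : ¬ ∀ t, deriv f t = 0 := by
    intro hall
    obtain ⟨a, b, hab⟩ := hnc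
    exact hab (is_const_of_deriv_eq_zero (fun x => (han x).differentiableAt) hall a b)
  apply countable_of_isolated
  intro x hx
  rcases (hg x).eventually_eq_zero_or_eventually_ne_zero with hev | hev
  · exfalso
    apply hgne
    have hana : AnalyticOnNhd ℝ (deriv f) Set.univ := fun t _ => hg t
    have := hana.eqOn_zero_of_preconnected_of_eventuallyEq_zero
      isPreconnected_univ (Set.mem_univ x) (by
        filter_upwards [hev] with t ht using ht)
    exact fun t => this (Set.mem_univ t)
  · rw [eventually_nhdsWithin_iff] at hev
    rw [Metric.eventually_nhds_iff] at hev
    obtain ⟨ε, hε, hev⟩ := hev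
    refine ⟨ε, hε, fun y hy hlt => ?_⟩
    by_contra hne
    exact hev (show dist y x < ε by rwa [Real.dist_eq]) hne hy

/-- Around every non-critical point there is a compact rational interval
on which `f` is injective. -/
lemma exists_rat_interval (han : ∀ t : ℝ, AnalyticAt ℝ f t) {x : ℝ}
    (hx : deriv f x ≠ 0) :
    ∃ q r : ℚ, x ∈ Set.Icc (q : ℝ) r ∧ Set.InjOn f (Set.Icc (q : ℝ) r) := by
  have hcont : Continuous (deriv f) := by
    have : AnalyticOnNhd ℝ f Set.univ := fun t _ => han t
    exact continuous_iff_continuousAt.mpr fun t => ((this.deriv) t (Set.mem_univ t)).continuousAt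
  have hopen : IsOpen {t : ℝ | deriv f t ≠ 0} := isOpen_ne_fun hcont continuous_const
  obtain ⟨δ, hδ, hball⟩ := Metric.isOpen_iff.mp hopen x hx
  obtain ⟨q, hq⟩ := exists_rat_btwn (show x - δ < x by linarith)
  obtain ⟨r, hr⟩ := exists_rat_btwn (show x < x + δ by linarith)
  have hsub : Set.Icc (q : ℝ) r ⊆ Metric.ball x δ := by
    intro y hy
    rw [Metric.mem_ball, Real.dist_eq, abs_sub_lt_iff]
    constructor <;> [linarith [hy.2, hr.2]; linarith [hy.1, hq.1]]
  have hne : ∀ y ∈ Set.Icc (q : ℝ) r, deriv f y ≠ 0 := fun y hy => hball (hsub hy)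
  have hfc : ContinuousOn f (Set.Icc (q : ℝ) r) :=
    (continuous_iff_continuousAt.mpr fun t => (han t).continuousAt).continuousOn
  -- the derivative has constant sign on the interval
  have hsign : (∀ y ∈ Set.Icc (q : ℝ) r, 0 < deriv f y) ∨
      (∀ y ∈ Set.Icc (q : ℝ) r, deriv f y < 0) := by
    by_contra hc
    push_neg at hc
    obtain ⟨⟨y1, hy1, hy1'⟩, ⟨y2, hy2, hy2'⟩⟩ := hc
    have h1 : deriv f y1 < 0 := lt_of_le_of_ne hy1' (hne y1 hy1)
    have h2 : 0 < deriv f y2 := lt_of_le_of_ne hy2' (Ne.symm (hne y2 hy2))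
    have hzero : (0 : ℝ) ∈ Set.uIcc (deriv f y1) (deriv f y2) := by
      rw [Set.mem_uIcc]
      left; exact ⟨h1.le, h2.le⟩
    have := intermediate_value_uIcc (f := deriv f)
      (hcont.continuousOn : ContinuousOn (deriv f) (Set.uIcc y1 y2))
    obtain ⟨y0, hy0, hy0'⟩ := this hzero
    have : y0 ∈ Set.Icc (q : ℝ) r := by
      rcases Set.mem_uIcc.mp hy0 with h | h
      · exact ⟨le_trans hy1.1 h.1, le_trans h.2 hy2.2⟩
      · exact ⟨le_trans hy2.1 h.1, le_trans h.2 hy1.2⟩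
    exact hne y0 this hy0'
  refine ⟨q, r, ⟨hq.2.le, hr.1.le⟩, ?_⟩
  rcases hsign with hpos | hneg
  · exact (strictMonoOn_of_deriv_pos (convex_Icc _ _) hfc (fun y hy =>
      hpos y (interior_subset hy))).injOn
  · exact (strictAntiOn_of_deriv_neg (convex_Icc _ _) hfc (fun y hy =>
      hneg y (interior_subset hy))).injOn


end Ana

section Rank
variable {V : Type} [Fintype V] [DecidableEq V] (G : SimpleGraph V)

lemma rank_part (Eo : Finset (V × V)) (hor : IsOrientation G Eo)
    (B : Matrix V {e // e ∈ Eo} ℝ)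
    (hB : ∀ (i : V) (e : {e // e ∈ Eo}),
      B i e = (if i = (e : V × V).2 then (1 : ℝ) else 0)
            - (if i = (e : V × V).1 then (1 : ℝ) else 0)) :
    (Module.finrank ℝ ↥(LinearMap.ker B.mulVecLin) : ℤ) =
      (Eo.card : ℤ) - (Fintype.card V : ℤ) + (Nat.card G.ConnectedComponent : ℤ) := by
  classical
  have hBt : ∀ (y : V → ℝ) (e : {e // e ∈ Eo}),
      Bᵀ.mulVecLin y e = y (e : V × V).2 - y (e : V × V).1 := by
    intro y e
    simp only [Matrix.mulVecLin_apply, Matrix.mulVec, Matrix.transpose_apply, dotProduct, hB]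
    rw [Finset.sum_congr rfl (fun i _ => sub_mul ((if i = (e : V × V).2 then (1:ℝ) else 0)) _ (y i)),
      Finset.sum_sub_distrib]
    have h1 : ∀ a : V, ∑ i, (if i = a then (1:ℝ) else 0) * y i = y a := by
      intro a
      simp [ite_mul]
    rw [h1, h1]
  -- the kernel of the transpose is the space of functions constant on components
  let φ : (G.ConnectedComponent → ℝ) →ₗ[ℝ] (V → ℝ) :=
    { toFun := fun g v => g (G.connectedComponentMk v)
      map_add' := fun g1 g2 => rfl
      map_smul' := fun c g => rfl }
  have hinj : Function.Injective φ := by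
    intro g1 g2 h
    funext c
    induction c using SimpleGraph.ConnectedComponent.ind with
    | _ v => exact congrFun h v
  have hrange : LinearMap.range φ = LinearMap.ker (Bᵀ.mulVecLin) := by
    apply le_antisymm
    · rintro y ⟨g, rfl⟩
      rw [LinearMap.mem_ker]
      funext e
      rw [hBt]
      show g (G.connectedComponentMk (e : V × V).2) - g (G.connectedComponentMk (e : V × V).1) = 0
      rw [SimpleGraph.ConnectedComponent.sound
        (SimpleGraph.Adj.reachable (hor.1 e e.2).symm)]
      ring
    · intro y hy
      rw [LinearMap.mem_ker] at hy
      have hedge : ∀ e : {e // e ∈ Eo}, y (e : V × V).2 = y (e : V × V).1 := by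
        intro e
        have := congrFun hy e
        rw [hBt, Pi.zero_apply, sub_eq_zero] at this
        exact this
      have hadj : ∀ i j : V, G.Adj i j → y i = y j := by
        intro i j hij
        rcases hor.2.1 i j hij with h | h
        · exact (hedge ⟨(i, j), h⟩).symm
        · exact hedge ⟨(j, i), h⟩
      have hreach : ∀ u v : V, G.Reachable u v → y u = y v := by
        intro u v hr
        obtain ⟨w⟩ := hr
        induction w with
        | nil => rfl
        | cons h p ih => exact (hadj _ _ h).trans ih
      refine ⟨fun c => y c.out, ?_⟩
      funext v
      show y (G.connectedComponentMk v).out = y v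
      exact (hreach _ _ (SimpleGraph.ConnectedComponent.exact (Quot.out_eq _))).symm |>.symm
  have hkerT : finrank ℝ ↥(LinearMap.ker (Bᵀ.mulVecLin)) = Nat.card G.ConnectedComponent := by
    rw [← hrange, LinearMap.finrank_range_of_inj hinj]
    have : Fintype G.ConnectedComponent := Fintype.ofFinite _
    rw [finrank_pi ℝ, Nat.card_eq_fintype_card]
  have h1 : B.rank + finrank ℝ ↥(LinearMap.ker B.mulVecLin) = Eo.card := by
    have := LinearMap.finrank_range_add_finrank_ker (B.mulVecLin)
    rw [finrank_pi ℝ, Fintype.card_coe] at this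
    exact this
  have h2 : Bᵀ.rank + Nat.card G.ConnectedComponent = Fintype.card V := by
    have := LinearMap.finrank_range_add_finrank_ker (Bᵀ.mulVecLin)
    rw [finrank_pi ℝ, hkerT] at this
    exact this
  have h3 : Bᵀ.rank = B.rank := Matrix.rank_transpose B
  omega

end Rank

/-- The main abstract dimension bound. -/
theorem coveringDimLE_of (X : Type) [MetricSpace X] [SecondCountableTopology X] (d : ℕ)
    (ψ : X → (Fin d → ℝ)) (hψ : Continuous ψ)
    (C : ℕ → Set X) (hCc : ∀ n, IsCompact (C n)) (hCu : (⋃ n, C n) = univ)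
    (hCinj : ∀ n, Set.InjOn ψ (C n)) :
    CoveringDimLE X d := by
  classical
  intro ι U hUo hUc
  by_cases hemp : IsEmpty X
  · refine ⟨PEmpty, fun k => ∅, fun k => k.elim, ?_, fun k => k.elim,
      fun x => (hemp.false x).elim⟩
    rw [Set.univ_eq_empty_iff.mpr hemp]
    simp
  · rw [not_isEmpty_iff] at hemp
    have hιne : Nonempty ι := by
      obtain ⟨x⟩ := hemp
      have : x ∈ ⋃ i, U i := hUc ▸ mem_univ x
      obtain ⟨i, _⟩ := Set.mem_iUnion.mp this
      exact ⟨i⟩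
    -- the fibered pieces
    set T : Fin (d+1) → Set X := fun i => ψ ⁻¹' (ratCount d i.1) with hT
    have hTz : ∀ i, ZDim ↥(T i) := by
      intro i
      apply zdim_iUnion (F := fun n => (Subtype.val ⁻¹' (C n) : Set ↥(T i)))
      · exact fun n => (hCc n).isClosed.preimage continuous_subtype_val
      · apply Set.eq_univ_of_forall
        intro a
        have : (a : X) ∈ ⋃ n, C n := hCu ▸ mem_univ _
        obtain ⟨n, hn⟩ := Set.mem_iUnion.mp this
        exact Set.mem_iUnion.mpr ⟨n, hn⟩
      · intro n
        apply zdim_of_clopenBase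
        -- embed the piece into ratCount d i
        have hg : Topology.IsEmbedding (fun c : ↥(C n) => ψ c.1) := by
          have : CompactSpace ↥(C n) := isCompact_iff_compactSpace.mp (hCc n)
          exact (Continuous.isClosedEmbedding (hψ.comp continuous_subtype_val)
            (fun c c' hcc => Subtype.ext (hCinj n c.2 c'.2 hcc))).toIsEmbedding
        have hh : Topology.IsEmbedding
            (fun a : ↥(Subtype.val ⁻¹' (C n) : Set ↥(T i)) => (⟨a.1.1, a.2⟩ : ↥(C n))) := by
          have hvv : Topology.IsEmbedding
              (fun a : ↥(Subtype.val ⁻¹' (C n) : Set ↥(T i)) => a.1.1) :=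
            Topology.IsEmbedding.subtypeVal.comp Topology.IsEmbedding.subtypeVal
          exact Topology.IsEmbedding.of_comp
            (Continuous.subtype_mk (continuous_subtype_val.comp continuous_subtype_val) _)
            continuous_subtype_val hvv
        have hgh : Topology.IsEmbedding
            (fun a : ↥(Subtype.val ⁻¹' (C n) : Set ↥(T i)) => ψ a.1.1) := hg.comp hh
        have hm : Topology.IsEmbedding
            (fun a : ↥(Subtype.val ⁻¹' (C n) : Set ↥(T i)) =>
              (⟨ψ a.1.1, a.1.2⟩ : ↥(ratCount d i.1))) := by
          exact Topology.IsEmbedding.of_comp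
            (Continuous.subtype_mk ((hψ.comp continuous_subtype_val).comp
              continuous_subtype_val) _) continuous_subtype_val hgh
        exact clopenBase_of_embedding hm (clopenBase_of_zdim (zdim_ratCount i.1))
    -- refine the cover on each piece, push down and expand
    have hstep : ∀ i : Fin (d+1), ∃ G : ℕ → Set X, (∀ n, IsOpen (G n)) ∧
        (∀ n, ∃ j, G n ⊆ U j) ∧ Pairwise (Function.onFun Disjoint G) ∧
        T i ⊆ ⋃ n, G n := by
      intro i
      have hcb : ClopenBase ↥(T i) := clopenBase_of_zdim (hTz i)
      obtain ⟨W, hWo, hWu, hWU, hWd⟩ := clopenBase_refinement hcb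
        (fun j => (Subtype.val ⁻¹' (U j) : Set ↥(T i)))
        (fun j => (hUo j).preimage continuous_subtype_val)
        (by rw [← Set.preimage_iUnion, hUc, Set.preimage_univ])
      choose idx hidx using hWU
      -- push down
      set V : ℕ → Set X := fun n => Subtype.val '' (W n) with hV
      have hVT : ∀ n, V n ⊆ T i := fun n => by
        rintro x ⟨a, _, rfl⟩; exact a.2
      have hVrel : ∀ n, ∃ O : Set X, IsOpen O ∧ V n = O ∩ T i := by
        intro n
        obtain ⟨O, hOo, hOW⟩ := isOpen_induced_iff.mp (hWo n)
        refine ⟨O, hOo, ?_⟩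
        have : V n = Subtype.val '' (Subtype.val ⁻¹' O : Set ↥(T i)) := by rw [hOW]
        rw [this, Subtype.image_preimage_coe, Set.inter_comm]
      choose O hOo hVO using hVrel
      obtain ⟨G, hGo, hVG, hGU, hGd⟩ := expansion V hVT O hOo hVO
        (fun a b hab => Set.disjoint_image_of_injective Subtype.val_injective (hWd hab))
        (fun n => U (idx n)) (fun n => hUo (idx n))
        (fun n => by
          rintro x ⟨a, ha, rfl⟩
          exact hidx n ha)
      refine ⟨G, hGo, fun n => ⟨idx n, hGU n⟩, hGd, ?_⟩
      intro x hx
      have hmem : (⟨x, hx⟩ : ↥(T i)) ∈ ⋃ n, W n := hWu ▸ mem_univ _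
      obtain ⟨n, hn⟩ := Set.mem_iUnion.mp hmem
      exact Set.mem_iUnion.mpr ⟨n, hVG n ⟨⟨x, hx⟩, hn, rfl⟩⟩
    choose G hGo hGU hGd hGcov using hstep
    refine ⟨Fin (d+1) × ℕ, fun p => G p.1 p.2, fun p => hGo p.1 p.2, ?_,
      fun p => hGU p.1 p.2, ?_⟩
    · apply Set.eq_univ_of_forall
      intro x
      have hle : Set.ncard {k | ¬ Irrational (ψ x k)} ≤ d := by
        have := Set.ncard_le_ncard (Set.subset_univ {k | ¬ Irrational (ψ x k)})
          (Set.finite_univ)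
        rwa [Set.ncard_univ, Nat.card_eq_fintype_card, Fintype.card_fin] at this
      have hxT : x ∈ T ⟨_, Nat.lt_succ_of_le hle⟩ := rfl
      obtain ⟨n, hn⟩ := Set.mem_iUnion.mp (hGcov _ hxT)
      exact Set.mem_iUnion.mpr ⟨(⟨_, Nat.lt_succ_of_le hle⟩, n), hn⟩
    · intro x
      show ({p : Fin (d+1) × ℕ | x ∈ G p.1 p.2}.Finite ∧
        {p : Fin (d+1) × ℕ | x ∈ G p.1 p.2}.ncard ≤ d + 1)
      have hinj : Set.InjOn Prod.fst {p : Fin (d+1) × ℕ | x ∈ G p.1 p.2} := by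
        intro p hp p' hp' he
        have h2 : p.2 = p'.2 := by
          by_contra hne
          have hd := hGd p.1 hne
          have hx2 : x ∈ G p.1 p'.2 := by rw [he]; exact hp'
          exact Set.disjoint_left.mp hd hp hx2
        exact Prod.ext he h2
      constructor
      · exact Set.Finite.of_finite_image (Set.toFinite _) hinj
      · have h1 := (Set.ncard_image_of_injOn hinj).symm
        have h2 : (Prod.fst '' {p : Fin (d+1) × ℕ | x ∈ G p.1 p.2}).ncard ≤
            (Set.univ : Set (Fin (d+1))).ncard :=
          Set.ncard_le_ncard (Set.subset_univ _) Set.finite_univ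
        rw [Set.ncard_univ, Nat.card_eq_fintype_card, Fintype.card_fin] at h2
        omega


lemma dim_part (E : Type) [Fintype E] (f : ℝ → ℝ)
    (hnc : ∃ a b : ℝ, f a ≠ f b) (han : ∀ t : ℝ, AnalyticAt ℝ f t)
    (H₁ : Submodule ℝ (E → ℝ)) :
    setCoveringDim {y : E → ℝ |
        (fun e => f (y e)) ∈ H₁ ∧ ∀ z ∈ H₁, ∑ e, y e * z e = 0}
      ≤ (Module.finrank ℝ H₁ : ℕ∞) := by
  classical
  set S : Set (E → ℝ) := {y : E → ℝ |
      (fun e => f (y e)) ∈ H₁ ∧ ∀ z ∈ H₁, ∑ e, y e * z e = 0} with hS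
  set d := Module.finrank ℝ ↥H₁ with hd
  have hfc : Continuous f := continuous_iff_continuousAt.mpr fun t => (han t).continuousAt
  -- S is closed
  have hSclosed : IsClosed S := by
    have h1 : IsClosed ((fun y : E → ℝ => (fun e => f (y e))) ⁻¹' (H₁ : Set (E → ℝ))) :=
      (Submodule.closed_of_finiteDimensional H₁).preimage
        (continuous_pi fun e => hfc.comp (continuous_apply e))
    have h2 : IsClosed (⋂ (z : E → ℝ), ⋂ (_ : z ∈ H₁), {y : E → ℝ | ∑ e, y e * z e = 0}) :=
      isClosed_iInter fun z => isClosed_iInter fun _ =>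
        isClosed_eq (continuous_finset_sum _ fun e _ =>
          (continuous_apply e).mul continuous_const) continuous_const
    have : S = ((fun y : E → ℝ => (fun e => f (y e))) ⁻¹' (H₁ : Set (E → ℝ))) ∩
        (⋂ (z : E → ℝ), ⋂ (_ : z ∈ H₁), {y : E → ℝ | ∑ e, y e * z e = 0}) := by
      ext y
      constructor
      · rintro ⟨h1', h2'⟩
        exact ⟨h1', Set.mem_iInter.mpr fun z => Set.mem_iInter.mpr fun hz => h2' z hz⟩
      · rintro ⟨h1', h2'⟩
        exact ⟨h1', fun z hz => Set.mem_iInter.mp (Set.mem_iInter.mp h2' z) hz⟩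
    rw [this]
    exact h1.inter h2
  -- the interval family
  let Jidx : Type := {p : ℚ × ℚ // Set.InjOn f (Set.Icc (p.1 : ℝ) (p.2 : ℝ))} ⊕
    {z : ℝ // deriv f z = 0}
  let Iv : Jidx → Set ℝ := fun j => match j with
    | .inl p => Set.Icc (p.1.1 : ℝ) (p.1.2 : ℝ)
    | .inr z => {z.1}
  have hIvcomp : ∀ j, IsCompact (Iv j) := by
    rintro (p | z)
    · exact isCompact_Icc
    · exact isCompact_singleton
  have hIvinj : ∀ j, Set.InjOn f (Iv j) := by
    rintro (p | z)
    · exact p.2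
    · intro x hx y hy _
      rw [Set.mem_singleton_iff] at hx hy
      rw [hx, hy]
  have hIvcov : ∀ x : ℝ, ∃ j, x ∈ Iv j := by
    intro x
    by_cases hx : deriv f x = 0
    · exact ⟨.inr ⟨x, hx⟩, rfl⟩
    · obtain ⟨q, r, hqr, hinj⟩ := exists_rat_interval han hx
      exact ⟨.inl ⟨(q, r), hinj⟩, hqr⟩
  have hJc : Countable Jidx := by
    have h2 : Countable {z : ℝ // deriv f z = 0} :=
      (countable_critical han hnc).to_subtype
    infer_instance
  have hJne : Nonempty Jidx := by
    obtain ⟨j, _⟩ := hIvcov 0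
    exact ⟨j⟩
  obtain ⟨en, hen⟩ := exists_surjective_nat (E → Jidx)
  -- the map ψ
  let bH := Module.finBasis ℝ ↥H₁
  let ψ : ↥S → (Fin d → ℝ) := fun y => bH.equivFun ⟨fun e => f (y.1 e), y.2.1⟩
  have hψc : Continuous ψ := by
    have hmap : Continuous (fun y : ↥S => (⟨fun e => f (y.1 e), y.2.1⟩ : ↥H₁)) :=
      Continuous.subtype_mk (continuous_pi fun e =>
        hfc.comp ((continuous_apply e).comp continuous_subtype_val)) _
    exact (LinearMap.continuous_of_finiteDimensional bH.equivFun.toLinearMap).comp hmap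
  -- the compact pieces
  let C : ℕ → Set ↥S := fun n => {a : ↥S | ∀ e, a.1 e ∈ Iv (en n e)}
  have hCc : ∀ n, IsCompact (C n) := by
    intro n
    rw [Topology.IsEmbedding.subtypeVal.isCompact_iff]
    have himg : Subtype.val '' (C n) = S ∩ Set.pi Set.univ (fun e => Iv (en n e)) := by
      ext y
      constructor
      · rintro ⟨a, ha, rfl⟩
        exact ⟨a.2, Set.mem_univ_pi.mpr ha⟩
      · rintro ⟨hy, hy2⟩
        exact ⟨⟨y, hy⟩, Set.mem_univ_pi.mp hy2, rfl⟩
    rw [himg]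
    refine IsCompact.of_isClosed_subset (isCompact_univ_pi fun e => hIvcomp _)
      (hSclosed.inter (isClosed_set_pi fun e _ => (hIvcomp _).isClosed))
      Set.inter_subset_right
  have hCu : (⋃ n, C n) = Set.univ := by
    apply Set.eq_univ_of_forall
    intro a
    have : ∀ e : E, ∃ j, a.1 e ∈ Iv j := fun e => hIvcov (a.1 e)
    choose w hw using this
    obtain ⟨n, hn⟩ := hen w
    exact Set.mem_iUnion.mpr ⟨n, fun e => by rw [hn]; exact hw e⟩
  have hCinj : ∀ n, Set.InjOn ψ (C n) := by
    intro n a ha b hb hab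
    have h1 : (⟨fun e => f (a.1 e), a.2.1⟩ : ↥H₁) = ⟨fun e => f (b.1 e), b.2.1⟩ := by
      have := congrArg bH.equivFun.symm hab
      rwa [LinearEquiv.symm_apply_apply, LinearEquiv.symm_apply_apply] at this
    have h2 : ∀ e, f (a.1 e) = f (b.1 e) := fun e =>
      congrFun (congrArg Subtype.val h1) e
    apply Subtype.ext
    funext e
    exact hIvinj (en n e) (ha e) (hb e) (h2 e)
  have hdim : CoveringDimLE ↥S d := coveringDimLE_of ↥S d ψ hψc C hCc hCu hCinj
  exact sInf_le ⟨d, by rw [hd], hdim⟩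

/-- For a finite graph `G` (`n` vertices, `m` edges, `c` connected
components) and a non-constant odd real-analytic `f`, the set of equilibria up to
symmetry `𝓔(G,f) = f⁻¹(H₁) ∩ H₁^⊥ ⊆ ℝ^E` has topological dimension at most
`dim H₁(G) = m − n + c`. -/
theorem stmt_11 {V : Type} [Fintype V] [DecidableEq V]
    (G : SimpleGraph V) [DecidableRel G.Adj]
    (f : ℝ → ℝ) (hodd : ∀ t : ℝ, f (-t) = -f t)
    (hnc : ∃ a b : ℝ, f a ≠ f b) (han : ∀ t : ℝ, AnalyticAt ℝ f t)
    (Eo : Finset (V × V)) (hor : IsOrientation G Eo)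
    (B : Matrix V {e // e ∈ Eo} ℝ)
    (hB : ∀ (i : V) (e : {e // e ∈ Eo}),
      B i e = (if i = (e : V × V).2 then (1 : ℝ) else 0)
            - (if i = (e : V × V).1 then (1 : ℝ) else 0))
    (H₁ : Submodule ℝ ({e // e ∈ Eo} → ℝ)) (hH₁ : H₁ = LinearMap.ker B.mulVecLin) :
    setCoveringDim {y : {e // e ∈ Eo} → ℝ |
        (fun e => f (y e)) ∈ H₁ ∧ ∀ z ∈ H₁, ∑ e, y e * z e = 0}
      ≤ (Module.finrank ℝ H₁ : ℕ∞) ∧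
    (Module.finrank ℝ H₁ : ℤ) =
      (Eo.card : ℤ) - (Fintype.card V : ℤ) + (Nat.card G.ConnectedComponent : ℤ) := by
  refine ⟨dim_part _ f hnc han H₁, ?_⟩
  rw [hH₁]
  exact rank_part G Eo hor B hB
end

section
/- Let G be a finite graph and let f : ℝ → ℝ be a non-constant, odd, real-analytic function, also denoting the componentwise map f : ℝ^E → ℝ^E. Then the topological dimensions satisfy dim( f⁻¹(H₁) ∩ H₁^⊥ ) ≤ dim( H₁ ∩ f(H₁^⊥) ), where H₁ ⊆ ℝ^E is the first homology group of G. -/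
open Matrix

/-! ### Auxiliary dimension theory -/

/-- Relative (ambient) form of `CoveringDimLE` for a subset `S` of `α`. -/
def DimLERel (α : Type) [TopologicalSpace α] (S : Set α) (n : ℕ) : Prop :=
  ∀ (ι : Type) (U : ι → Set α), (∀ i, IsOpen (U i)) → S ⊆ (⋃ i, U i) →
    ∃ (κ : Type) (W : κ → Set α), (∀ k, IsOpen (W k)) ∧ S ⊆ (⋃ k, W k) ∧
      (∀ k, ∃ i, W k ⊆ U i) ∧
      (∀ x ∈ S, {k | x ∈ W k}.Finite ∧ {k | x ∈ W k}.ncard ≤ n + 1)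

section DimTheory

variable {α : Type} [TopologicalSpace α]

lemma dimLERel_of_coveringDimLE {S : Set α} {n : ℕ} (h : CoveringDimLE S n) :
    DimLERel α S n := by
  intro ι U hUo hUc
  have hUc' : (⋃ i, (Subtype.val ⁻¹' U i : Set S)) = Set.univ := by
    ext x
    simp only [Set.mem_iUnion, Set.mem_preimage, Set.mem_univ, iff_true]
    exact Set.mem_iUnion.mp (hUc x.2)
  obtain ⟨κ, W', hW'o, hW'c, hW'ref, hW'mult⟩ :=
    h ι (fun i => Subtype.val ⁻¹' U i) (fun i => (hUo i).preimage continuous_subtype_val) hUc'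
  have hO : ∀ k, ∃ O : Set α, IsOpen O ∧ Subtype.val ⁻¹' O = W' k := by
    intro k
    obtain ⟨O, hO1, hO2⟩ := isOpen_induced_iff.mp (hW'o k)
    exact ⟨O, hO1, hO2⟩
  choose O hOopen hOeq using hO
  choose iof hiof using hW'ref
  refine ⟨κ, fun k => O k ∩ U (iof k), fun k => (hOopen k).inter (hUo (iof k)), ?_, ?_, ?_⟩
  · intro x hx
    have : (⟨x, hx⟩ : S) ∈ ⋃ k, W' k := by rw [hW'c]; trivial
    obtain ⟨k, hk⟩ := Set.mem_iUnion.mp this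
    refine Set.mem_iUnion.mpr ⟨k, ?_, ?_⟩
    · rw [← hOeq k] at hk; exact hk
    · have := hiof k hk; exact this
  · intro k; exact ⟨iof k, Set.inter_subset_right⟩
  · intro x hx
    have hsub : {k | x ∈ O k ∩ U (iof k)} ⊆ {k | (⟨x, hx⟩ : S) ∈ W' k} := by
      intro k hk
      have : x ∈ O k := hk.1
      show (⟨x, hx⟩ : S) ∈ W' k
      rw [← hOeq k]; exact this
    obtain ⟨hfin, hcard⟩ := hW'mult ⟨x, hx⟩
    exact ⟨hfin.subset hsub, le_trans (Set.ncard_le_ncard hsub hfin) hcard⟩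

lemma coveringDimLE_of_dimLERel {S : Set α} {n : ℕ} (h : DimLERel α S n) :
    CoveringDimLE S n := by
  intro ι U' hU'o hU'c
  have hO : ∀ i, ∃ O : Set α, IsOpen O ∧ Subtype.val ⁻¹' O = U' i := by
    intro i
    obtain ⟨O, hO1, hO2⟩ := isOpen_induced_iff.mp (hU'o i)
    exact ⟨O, hO1, hO2⟩
  choose Uh hUhopen hUheq using hO
  have hcov : S ⊆ ⋃ i, Uh i := by
    intro x hx
    have : (⟨x, hx⟩ : S) ∈ ⋃ i, U' i := by rw [hU'c]; trivial
    obtain ⟨i, hi⟩ := Set.mem_iUnion.mp this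
    rw [← hUheq i] at hi
    exact Set.mem_iUnion.mpr ⟨i, hi⟩
  obtain ⟨κ, W, hWo, hWc, href, hmult⟩ := h ι Uh hUhopen hcov
  refine ⟨κ, fun k => Subtype.val ⁻¹' W k, fun k => (hWo k).preimage continuous_subtype_val,
    ?_, ?_, ?_⟩
  · ext x
    simp only [Set.mem_iUnion, Set.mem_preimage, Set.mem_univ, iff_true]
    exact Set.mem_iUnion.mp (hWc x.2)
  · intro k
    obtain ⟨i, hi⟩ := href k
    refine ⟨i, ?_⟩
    rw [← hUheq i]
    exact fun x hx => hi hx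
  · intro x
    have : {k | x ∈ Subtype.val ⁻¹' W k} = {k | (x : α) ∈ W k} := rfl
    rw [this]
    exact hmult x.1 x.2

lemma DimLERel.mono_closed {S C : Set α} {n : ℕ} (h : DimLERel α S n) (hCS : C ⊆ S)
    (hC : IsClosed C) : DimLERel α C n := by
  intro ι U hUo hUc
  rcases Set.eq_empty_or_nonempty C with hCe | hCne
  · exact ⟨PEmpty, fun k => ∅, fun k => isOpen_empty, by simp [hCe],
      fun k => k.elim, fun x hx => by simp [hCe] at hx⟩
  obtain ⟨x₀, hx₀⟩ := hCne
  obtain ⟨i₀, _⟩ := Set.mem_iUnion.mp (hUc hx₀)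
  have hcov : S ⊆ ⋃ o : Option ι, (fun o => Option.elim o Cᶜ U) o := by
    intro x hx
    by_cases hxC : x ∈ C
    · obtain ⟨i, hi⟩ := Set.mem_iUnion.mp (hUc hxC)
      exact Set.mem_iUnion.mpr ⟨some i, hi⟩
    · exact Set.mem_iUnion.mpr ⟨none, hxC⟩
  obtain ⟨κ, W, hWo, hWc, href, hmult⟩ := h (Option ι) (fun o => Option.elim o Cᶜ U)
    (fun o => by cases o with
      | none => exact hC.isOpen_compl
      | some i => exact hUo i) hcov
  classical
  refine ⟨κ, fun k => if ∃ i, W k ⊆ U i then W k else ∅, ?_, ?_, ?_, ?_⟩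
  · intro k
    show IsOpen (if ∃ i, W k ⊆ U i then W k else ∅)
    by_cases hcase : ∃ i, W k ⊆ U i
    · rw [if_pos hcase]; exact hWo k
    · rw [if_neg hcase]; exact isOpen_empty
  · intro x hx
    obtain ⟨k, hk⟩ := Set.mem_iUnion.mp (hWc (hCS hx))
    obtain ⟨o, ho⟩ := href k
    cases o with
    | none => exact absurd (ho hk) (by simpa using hx)
    | some i =>
      refine Set.mem_iUnion.mpr ⟨k, ?_⟩
      show x ∈ (if ∃ i, W k ⊆ U i then W k else ∅)
      rw [if_pos ⟨i, ho⟩]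
      exact hk
  · intro k
    by_cases hcase : ∃ i, W k ⊆ U i
    · obtain ⟨i, hi⟩ := hcase
      refine ⟨i, ?_⟩
      show (if ∃ i, W k ⊆ U i then W k else ∅) ⊆ U i
      rw [if_pos ⟨i, hi⟩]; exact hi
    · refine ⟨i₀, ?_⟩
      show (if ∃ i, W k ⊆ U i then W k else ∅) ⊆ U i₀
      rw [if_neg hcase]; exact Set.empty_subset _
  · intro x hx
    have hsub : {k | x ∈ if ∃ i, W k ⊆ U i then W k else ∅} ⊆ {k | x ∈ W k} := by
      intro k hk
      simp only [Set.mem_setOf_eq] at hk ⊢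
      by_cases hcase : ∃ i, W k ⊆ U i
      · rwa [if_pos hcase] at hk
      · rw [if_neg hcase] at hk; exact absurd hk (Set.notMem_empty x)
    obtain ⟨hfin, hcard⟩ := hmult x (hCS hx)
    exact ⟨hfin.subset hsub, le_trans (Set.ncard_le_ncard hsub hfin) hcard⟩

lemma CoveringDimLE.of_homeomorph {X Y : Type} [TopologicalSpace X] [TopologicalSpace Y]
    (e : X ≃ₜ Y) {n : ℕ} (hY : CoveringDimLE Y n) : CoveringDimLE X n := by
  intro ι U hUo hUc
  have hcov : (⋃ i, e.symm ⁻¹' U i) = Set.univ := by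
    ext y
    simp only [Set.mem_iUnion, Set.mem_preimage, Set.mem_univ, iff_true]
    exact Set.mem_iUnion.mp (hUc ▸ Set.mem_univ (e.symm y))
  obtain ⟨κ, W', hW'o, hW'c, href, hmult⟩ := hY ι (fun i => e.symm ⁻¹' U i)
    (fun i => (hUo i).preimage e.symm.continuous) hcov
  refine ⟨κ, fun k => e ⁻¹' W' k, fun k => (hW'o k).preimage e.continuous, ?_, ?_, ?_⟩
  · ext x
    simp only [Set.mem_iUnion, Set.mem_preimage, Set.mem_univ, iff_true]
    exact Set.mem_iUnion.mp (hW'c ▸ Set.mem_univ (e x))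
  · intro k
    obtain ⟨i, hi⟩ := href k
    refine ⟨i, fun x hx => ?_⟩
    have := hi hx
    simpa using this
  · intro x
    exact hmult (e x)

lemma DimLERel.of_image {β : Type} [TopologicalSpace β] [T2Space α] [T2Space β] {g : α → β}
    (hg : Continuous g) {S : Set α} (hS : IsCompact S) (hinj : Set.InjOn g S) {n : ℕ}
    (h : DimLERel β (g '' S) n) : DimLERel α S n := by
  haveI : CompactSpace S := isCompact_iff_compactSpace.mp hS
  have hcont : Continuous ((Equiv.Set.imageOfInjOn g S hinj : S → (g '' S : Set β))) := by
    apply Continuous.subtype_mk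
    exact hg.comp continuous_subtype_val
  have e : (S : Type) ≃ₜ (g '' S : Set β) := hcont.homeoOfEquivCompactToT2
  exact dimLERel_of_coveringDimLE (CoveringDimLE.of_homeomorph e (coveringDimLE_of_dimLERel h))

end DimTheory

section SumTheorem

variable {γ : Type} [MetricSpace γ]

lemma exists_thickening_iInter_empty {ι : Type} {J : Finset ι} (hJne : J.Nonempty)
    {K : ι → Set γ} (hK : ∀ j ∈ J, IsCompact (K j)) (hemp : ⋂ j ∈ J, K j = ∅) :
    ∃ ε : ℝ, 0 < ε ∧ ⋂ j ∈ J, Metric.thickening ε (K j) = ∅ := by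
  classical
  by_cases hne : ∀ j ∈ J, (K j).Nonempty
  · by_contra hcon
    push_neg at hcon
    have hx : ∀ m : ℕ, ∃ x : γ, x ∈ ⋂ j ∈ J, Metric.thickening (1 / (m + 1)) (K j) := by
      intro m
      have hpos : (0:ℝ) < 1 / (m + 1) := by positivity
      exact hcon (1/(m+1)) hpos
    choose x hx using hx
    obtain ⟨j₀, hj₀⟩ := hJne
    have hxin : ∀ (m : ℕ) (j : ι), j ∈ J → x m ∈ Metric.thickening (1/((m:ℝ)+1)) (K j) := by
      intro m j hj
      have := hx m
      simp only [Set.mem_iInter] at this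
      exact this j hj
    have hc : ∀ m, ∃ c ∈ K j₀, dist (x m) c < 1/(m+1) := fun m =>
      Metric.mem_thickening_iff.mp (hxin m j₀ hj₀)
    choose c hcK hcd using hc
    obtain ⟨L, hLK, φ, hφ, hconv⟩ := (hK j₀ hj₀).tendsto_subseq hcK
    have hrecip : Filter.Tendsto (fun m : ℕ => 1/((φ m : ℝ)+1)) Filter.atTop (nhds 0) := by
      have hb : ∀ m : ℕ, 1/((φ m : ℝ)+1) ≤ 1/((m : ℝ)+1) := by
        intro m
        have : (m : ℝ) + 1 ≤ (φ m : ℝ) + 1 := by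
          have h2 : m ≤ φ m := hφ.le_apply
          have := (Nat.cast_le (α := ℝ)).mpr h2
          linarith
        apply one_div_le_one_div_of_le (by positivity) this
      have hnn : ∀ m : ℕ, (0:ℝ) ≤ 1/((φ m : ℝ)+1) := fun m => by positivity
      exact squeeze_zero hnn hb tendsto_one_div_add_atTop_nhds_zero_nat
    have hdL : Filter.Tendsto (fun m => dist (x (φ m)) L) Filter.atTop (nhds 0) := by
      have h1 : Filter.Tendsto (fun m => dist (c (φ m)) L) Filter.atTop (nhds 0) :=
        tendsto_iff_dist_tendsto_zero.mp hconv
      have hb : ∀ m, dist (x (φ m)) L ≤ 1/((φ m : ℝ)+1) + dist (c (φ m)) L := by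
        intro m
        calc dist (x (φ m)) L ≤ dist (x (φ m)) (c (φ m)) + dist (c (φ m)) L :=
              dist_triangle _ _ _
          _ ≤ 1/((φ m : ℝ)+1) + dist (c (φ m)) L := by
              have := (hcd (φ m)).le
              push_cast at this ⊢
              linarith
      have := hrecip.add h1
      rw [add_zero] at this
      exact squeeze_zero (fun m => dist_nonneg) hb this
    have hLmem : ∀ j ∈ J, L ∈ K j := by
      intro j hj
      have hbound : ∀ m, Metric.infDist L (K j) ≤ dist (x (φ m)) L + 1/((φ m : ℝ)+1) := by
        intro m
        obtain ⟨z, hzK, hzd⟩ := Metric.mem_thickening_iff.mp (hxin (φ m) j hj)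
        calc Metric.infDist L (K j) ≤ dist L z := Metric.infDist_le_dist_of_mem hzK
          _ ≤ dist L (x (φ m)) + dist (x (φ m)) z := dist_triangle _ _ _
          _ ≤ dist (x (φ m)) L + 1/((φ m : ℝ)+1) := by
              rw [dist_comm L (x (φ m))]
              have := hzd.le
              push_cast at this ⊢
              linarith
      have htend : Filter.Tendsto (fun m => dist (x (φ m)) L + 1/((φ m : ℝ)+1))
          Filter.atTop (nhds 0) := by
        have := hdL.add hrecip
        rwa [add_zero] at this
      have hle : Metric.infDist L (K j) ≤ 0 :=
        ge_of_tendsto htend (Filter.Eventually.of_forall hbound)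
      have h0 : Metric.infDist L (K j) = 0 := le_antisymm hle Metric.infDist_nonneg
      exact ((hK j hj).isClosed.mem_iff_infDist_zero (hne j hj)).mpr h0
    have : L ∈ ⋂ j ∈ J, K j := Set.mem_iInter₂.mpr hLmem
    rw [hemp] at this
    exact this
  · push_neg at hne
    obtain ⟨j, hj, hKj⟩ := hne
    refine ⟨1, one_pos, ?_⟩
    have hsub : (⋂ j ∈ J, Metric.thickening 1 (K j)) ⊆ Metric.thickening 1 (K j) :=
      Set.biInter_subset_of_mem hj
    rw [hKj, Metric.thickening_empty] at hsub
    exact Set.subset_empty_iff.mp hsub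

lemma dim_stage {A : Set γ} {K0 : Set γ} (hK0 : IsCompact K0) {n : ℕ}
    (hdim : DimLERel γ K0 n) {ι : Type} (W : ι → Set γ) (hWo : ∀ i, IsOpen (W i))
    (hWc : A ⊆ ⋃ i, W i) (hK0A : K0 ⊆ A) :
    ∃ W' : ι → Set γ, (∀ i, IsOpen (W' i)) ∧ (∀ i, W' i ⊆ W i) ∧
      (∀ i, W i \ K0 ⊆ W' i) ∧ (A ⊆ ⋃ i, W' i) ∧
      (∀ x ∈ K0, {i | x ∈ W' i}.Finite ∧ {i | x ∈ W' i}.ncard ≤ n + 1) := by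
  classical
  obtain ⟨κ, Wp, hWpo, hWpc, hWpref, hWpmult⟩ := hdim ι W hWo (hK0A.trans hWc)
  obtain ⟨t, ht⟩ := hK0.elim_finite_subcover Wp hWpo hWpc
  choose ch hch using hWpref
  set S : ι → Set γ := fun i => ⋃ k ∈ t.filter (fun k => ch k = i), Wp k with hSdef
  have hSo : ∀ i, IsOpen (S i) := fun i => isOpen_biUnion (fun k _ => hWpo k)
  have hSsub : ∀ i, S i ⊆ W i := by
    intro i
    apply Set.iUnion₂_subset
    intro k hk
    rcases Finset.mem_filter.mp hk with ⟨_, hki⟩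
    rw [← hki]
    exact hch k
  set I₀ : Finset ι := t.image ch with hI₀def
  have hScov : K0 ⊆ ⋃ i ∈ I₀, S i := by
    intro y hy
    obtain ⟨k, hkt, hky⟩ := Set.mem_iUnion₂.mp (ht hy)
    refine Set.mem_iUnion₂.mpr ⟨ch k, Finset.mem_image_of_mem ch hkt, ?_⟩
    exact Set.mem_biUnion (Finset.mem_filter.mpr ⟨hkt, rfl⟩) hky
  have hSmem : ∀ {y : γ} {i : ι}, y ∈ S i → ∃ k, k ∈ t ∧ ch k = i ∧ y ∈ Wp k := by
    intro y i hy
    obtain ⟨k, hk, hky⟩ := Set.mem_iUnion₂.mp hy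
    rcases Finset.mem_filter.mp hk with ⟨hkt, hki⟩
    exact ⟨k, hkt, hki, hky⟩
  have hSmult : ∀ x ∈ K0, {i | x ∈ S i}.ncard ≤ n + 1 := by
    intro x hx
    rcases Set.eq_empty_or_nonempty {i | x ∈ S i} with he | hne
    · simp [he]
    obtain ⟨i₁, hi₁⟩ := hne
    obtain ⟨k₁, _, _, _⟩ := hSmem hi₁
    have hpk : ∀ i : ι, ∃ k : κ, i ∈ {i | x ∈ S i} → (k ∈ t ∧ ch k = i ∧ x ∈ Wp k) := by
      intro i
      by_cases hi : i ∈ {i | x ∈ S i}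
      · obtain ⟨k, h1, h2, h3⟩ := hSmem hi
        exact ⟨k, fun _ => ⟨h1, h2, h3⟩⟩
      · exact ⟨k₁, fun h => absurd h hi⟩
    choose pk hpk using hpk
    obtain ⟨hfin, hcard⟩ := hWpmult x hx
    refine le_trans (Set.ncard_le_ncard_of_injOn pk ?_ ?_ hfin) hcard
    · intro i hi
      exact (hpk i hi).2.2
    · intro i hi i' hi' heq
      have h1 := (hpk i hi).2.1
      have h2 := (hpk i' hi').2.1
      rw [← h1, ← h2, heq]
  obtain ⟨K, hKc, hKsub, hKcov⟩ := hK0.finite_compact_cover I₀ S (fun i _ => hSo i) hScov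
  have hKF : ∀ i ∈ I₀, K i ⊆ K0 := by
    intro i hi
    rw [hKcov]
    exact Set.subset_biUnion_of_mem hi
  choose εi hεipos hεithick using fun i : ι =>
    (hKc i).exists_thickening_subset_open (hSo i) (hKsub i)
  have hJemp : ∀ J ∈ Finset.powersetCard (n+2) I₀, ⋂ j ∈ J, K j = ∅ := by
    intro J hJ
    rcases Finset.mem_powersetCard.mp hJ with ⟨hJsub, hJcard⟩
    by_contra hne
    obtain ⟨y, hy⟩ := Set.nonempty_iff_ne_empty.mpr hne
    have hymem : ∀ j ∈ J, y ∈ K j := Set.mem_iInter₂.mp hy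
    have hJne : J.Nonempty := Finset.card_pos.mp (by omega)
    obtain ⟨j₀, hj₀⟩ := hJne
    have hyK0 : y ∈ K0 := hKF j₀ (hJsub hj₀) (hymem j₀ hj₀)
    have hsub2 : (J : Set ι) ⊆ {i | y ∈ S i} := fun j hj => hKsub j (hymem j hj)
    have hfin : {i | y ∈ S i}.Finite := by
      apply Set.Finite.subset I₀.finite_toSet
      intro i hi
      obtain ⟨k, hkt, hki, _⟩ := hSmem hi
      rw [← hki]
      exact Finset.mem_coe.mpr (Finset.mem_image_of_mem ch hkt)
    have hle : J.card ≤ n + 1 := by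
      calc J.card = (J : Set ι).ncard := (Set.ncard_coe_finset J).symm
        _ ≤ {i | y ∈ S i}.ncard := Set.ncard_le_ncard hsub2 hfin
        _ ≤ n + 1 := hSmult y hyK0
    omega
  have hJeps : ∀ J : Finset ι, ∃ ε : ℝ, 0 < ε ∧
      (J ∈ Finset.powersetCard (n+2) I₀ → ⋂ j ∈ J, Metric.thickening ε (K j) = ∅) := by
    intro J
    by_cases hJ : J ∈ Finset.powersetCard (n+2) I₀
    · have hJne : J.Nonempty := by
        rcases Finset.mem_powersetCard.mp hJ with ⟨_, hJcard⟩
        exact Finset.card_pos.mp (by omega)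
      obtain ⟨ε, hε, hh⟩ := exists_thickening_iInter_empty hJne
        (fun j _ => hKc j) (hJemp J hJ)
      exact ⟨ε, hε, fun _ => hh⟩
    · exact ⟨1, one_pos, fun h => absurd h hJ⟩
  choose εJ hεJpos hεJ using hJeps
  set allε : Finset ℝ := insert 1 ((I₀.image εi) ∪ ((Finset.powersetCard (n+2) I₀).image εJ))
    with hallε
  have hane : allε.Nonempty := ⟨1, Finset.mem_insert_self _ _⟩
  set ε : ℝ := allε.min' hane with hεdef
  have hεpos : 0 < ε := by
    have hmem := allε.min'_mem hane
    rw [← hεdef] at hmem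
    rcases Finset.mem_insert.mp hmem with h1 | h2
    · rw [h1]; exact one_pos
    rcases Finset.mem_union.mp h2 with h3 | h4
    · obtain ⟨i, _, hi⟩ := Finset.mem_image.mp h3
      rw [← hi]; exact hεipos i
    · obtain ⟨J, _, hJ⟩ := Finset.mem_image.mp h4
      rw [← hJ]; exact hεJpos J
  have hεle_i : ∀ i ∈ I₀, ε ≤ εi i := by
    intro i hi
    exact Finset.min'_le _ _ (Finset.mem_insert_of_mem
      (Finset.mem_union_left _ (Finset.mem_image_of_mem εi hi)))
  have hεle_J : ∀ J ∈ Finset.powersetCard (n+2) I₀, ε ≤ εJ J := by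
    intro J hJ
    exact Finset.min'_le _ _ (Finset.mem_insert_of_mem
      (Finset.mem_union_right _ (Finset.mem_image_of_mem εJ hJ)))
  refine ⟨fun i => (if i ∈ I₀ then Metric.thickening ε (K i) else ∅) ∪ (W i \ K0),
    ?_, ?_, ?_, ?_, ?_⟩
  · intro i
    apply IsOpen.union
    · by_cases hi : i ∈ I₀
      · rw [if_pos hi]; exact Metric.isOpen_thickening
      · rw [if_neg hi]; exact isOpen_empty
    · exact (hWo i).sdiff hK0.isClosed
  · intro i
    apply Set.union_subset
    · by_cases hi : i ∈ I₀
      · rw [if_pos hi]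
        refine le_trans (Metric.thickening_mono (hεle_i i hi) (K i)) ?_
        exact (hεithick i).trans (hSsub i)
      · rw [if_neg hi]; exact Set.empty_subset _
    · exact Set.diff_subset
  · intro i
    exact Set.subset_union_right
  · intro x hx
    by_cases hxK : x ∈ K0
    · have : x ∈ ⋃ i ∈ I₀, K i := by rw [← hKcov]; exact hxK
      obtain ⟨i, hi, hxi⟩ := Set.mem_iUnion₂.mp this
      refine Set.mem_iUnion.mpr ⟨i, Set.mem_union_left _ ?_⟩
      rw [if_pos hi]
      exact Metric.self_subset_thickening hεpos (K i) hxi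
    · obtain ⟨i, hi⟩ := Set.mem_iUnion.mp (hWc hx)
      exact Set.mem_iUnion.mpr ⟨i, Set.mem_union_right _ ⟨hi, hxK⟩⟩
  · intro x hx
    have heq : {i | x ∈ (if i ∈ I₀ then Metric.thickening ε (K i) else ∅) ∪ (W i \ K0)}
        = {i : ι | i ∈ I₀ ∧ x ∈ Metric.thickening ε (K i)} := by
      ext i
      simp only [Set.mem_setOf_eq, Set.mem_union]
      constructor
      · rintro (h1 | h2)
        · by_cases hi : i ∈ I₀
          · rw [if_pos hi] at h1; exact ⟨hi, h1⟩
          · rw [if_neg hi] at h1; exact absurd h1 (Set.notMem_empty x)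
        · exact absurd hx h2.2
      · rintro ⟨hi, h⟩
        left
        rw [if_pos hi]
        exact h
    rw [heq]
    have hfin : {i : ι | i ∈ I₀ ∧ x ∈ Metric.thickening ε (K i)}.Finite :=
      Set.Finite.subset I₀.finite_toSet (fun i hi => hi.1)
    refine ⟨hfin, ?_⟩
    by_contra hcon
    push_neg at hcon
    obtain ⟨T, hTsub, hTcard⟩ := Set.exists_subset_card_eq
      (s := {i : ι | i ∈ I₀ ∧ x ∈ Metric.thickening ε (K i)}) (n := n + 2) (by omega)
    have hTfin : T.Finite := hfin.subset hTsub
    set J : Finset ι := hTfin.toFinset with hJdef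
    have hJsub : J ⊆ I₀ := by
      intro j hj
      exact (hTsub (hTfin.mem_toFinset.mp hj)).1
    have hJcard : J.card = n + 2 := by
      rw [hJdef, ← Set.ncard_eq_toFinset_card T hTfin]
      exact hTcard
    have hJP : J ∈ Finset.powersetCard (n+2) I₀ := Finset.mem_powersetCard.mpr ⟨hJsub, hJcard⟩
    have hxJ : x ∈ ⋂ j ∈ J, Metric.thickening (εJ J) (K j) := by
      refine Set.mem_iInter₂.mpr ?_
      intro j hj
      have := (hTsub (hTfin.mem_toFinset.mp hj)).2
      exact Metric.thickening_mono (hεle_J J hJP) (K j) this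
    rw [hεJ J hJP] at hxJ
    exact hxJ

lemma DimLERel.of_locFin_compact_cover {A : Set γ} {F : ℕ → Set γ} {n : ℕ}
    (hFc : ∀ r, IsCompact (F r)) (hFA : ∀ r, F r ⊆ A) (hcov : A ⊆ ⋃ r, F r)
    (hlf : ∀ x ∈ A, ∃ N, x ∈ N ∧ IsOpen N ∧ {r | (F r ∩ N).Nonempty}.Finite)
    (hdim : ∀ r, DimLERel γ (F r) n) : DimLERel γ A n := by
  intro ι U hUo hUc
  classical
  have hex : ∀ (W : ι → Set γ) (r : ℕ), ∃ W' : ι → Set γ,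
      ((∀ i, IsOpen (W i)) ∧ A ⊆ ⋃ i, W i) →
      ((∀ i, IsOpen (W' i)) ∧ (∀ i, W' i ⊆ W i) ∧ (∀ i, W i \ F r ⊆ W' i) ∧
        (A ⊆ ⋃ i, W' i) ∧
        (∀ x ∈ F r, {i | x ∈ W' i}.Finite ∧ {i | x ∈ W' i}.ncard ≤ n + 1)) := by
    intro W r
    by_cases h : (∀ i, IsOpen (W i)) ∧ A ⊆ ⋃ i, W i
    · obtain ⟨W', h1, h2, h3, h4, h5⟩ := dim_stage (hFc r) (hdim r) W h.1 h.2 (hFA r)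
      exact ⟨W', fun _ => ⟨h1, h2, h3, h4, h5⟩⟩
    · exact ⟨W, fun hh => absurd hh h⟩
  choose stepf hstepf using hex
  set Wseq : ℕ → ι → Set γ :=
    fun r => Nat.rec U (fun r W => stepf W r) r with hWseqdef
  have hWs : ∀ r, Wseq (r+1) = stepf (Wseq r) r := fun r => rfl
  have hinv : ∀ r, (∀ i, IsOpen (Wseq r i)) ∧ A ⊆ ⋃ i, Wseq r i := by
    intro r
    induction r with
    | zero => exact ⟨hUo, hUc⟩
    | succ r ih =>
      have h := hstepf (Wseq r) r ih
      rw [hWs r]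
      exact ⟨h.1, h.2.2.2.1⟩
  have hspec : ∀ r, (∀ i, Wseq (r+1) i ⊆ Wseq r i) ∧
      (∀ i, Wseq r i \ F r ⊆ Wseq (r+1) i) ∧
      (∀ x ∈ F r, {i | x ∈ Wseq (r+1) i}.Finite ∧ {i | x ∈ Wseq (r+1) i}.ncard ≤ n + 1) := by
    intro r
    have h := hstepf (Wseq r) r (hinv r)
    rw [hWs r]
    exact ⟨h.2.1, h.2.2.1, h.2.2.2.2⟩
  have hmono : ∀ i (r s : ℕ), r ≤ s → Wseq s i ⊆ Wseq r i := by
    intro i r s hrs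
    induction s, hrs using Nat.le_induction with
    | base => exact fun z hz => hz
    | succ s hs ih => exact fun z hz => ih ((hspec s).1 i hz)
  refine ⟨ι, fun i => interior (⋂ r, Wseq r i), fun i => isOpen_interior, ?_, ?_, ?_⟩
  · -- covering
    intro x hx
    obtain ⟨N, hxN, hNo, hNfin⟩ := hlf x hx
    obtain ⟨R, hR⟩ : ∃ R : ℕ, ∀ r, R ≤ r → F r ∩ N = ∅ := by
      obtain ⟨R, hR⟩ := hNfin.bddAbove
      refine ⟨R + 1, fun r hr => ?_⟩
      by_contra hne
      have : r ∈ {r | (F r ∩ N).Nonempty} := Set.nonempty_iff_ne_empty.mpr hne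
      have := hR this
      omega
    have hstab : ∀ i (r : ℕ), R ≤ r → Wseq R i ∩ N = Wseq r i ∩ N := by
      intro i r hr
      induction r, hr using Nat.le_induction with
      | base => rfl
      | succ r hr ih =>
        rw [ih]
        apply Set.Subset.antisymm
        · intro z hz
          refine ⟨(hspec r).2.1 i ⟨hz.1, ?_⟩, hz.2⟩
          intro hzF
          have : z ∈ F r ∩ N := ⟨hzF, hz.2⟩
          rw [hR r hr] at this
          exact this
        · intro z hz
          exact ⟨(hspec r).1 i hz.1, hz.2⟩
    have hsub : ∀ i, Wseq R i ∩ N ⊆ ⋂ r, Wseq r i := by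
      intro i z hz
      refine Set.mem_iInter.mpr fun r => ?_
      rcases le_or_gt R r with h | h
      · exact ((hstab i r h) ▸ hz).1
      · exact hmono i r R h.le hz.1
    obtain ⟨i, hi⟩ := Set.mem_iUnion.mp ((hinv R).2 hx)
    refine Set.mem_iUnion.mpr ⟨i, ?_⟩
    have hopen : IsOpen (Wseq R i ∩ N) := ((hinv R).1 i).inter hNo
    exact interior_maximal (hsub i) hopen ⟨hi, hxN⟩
  · -- refinement
    intro i
    exact ⟨i, le_trans interior_subset (Set.iInter_subset _ 0)⟩
  · -- multiplicity
    intro x hx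
    obtain ⟨s, hs⟩ := Set.mem_iUnion.mp (hcov hx)
    have hsub : {i | x ∈ interior (⋂ r, Wseq r i)} ⊆ {i | x ∈ Wseq (s+1) i} := by
      intro i hi
      exact Set.mem_iInter.mp (interior_subset hi) (s+1)
    obtain ⟨hfin, hcard⟩ := (hspec s).2.2 x hs
    exact ⟨hfin.subset hsub, le_trans (Set.ncard_le_ncard hsub hfin) hcard⟩

end SumTheorem

section Analysis

/-- The key structure theorem for a non-constant real-analytic function: the real line is
divided by a "locally finite" closed set `D` into intervals `[p, nxt p]` on each of which
`f` is injective. -/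
lemma analysis_main {f : ℝ → ℝ} (hnc : ∃ a b : ℝ, f a ≠ f b)
    (han : ∀ t : ℝ, AnalyticAt ℝ f t) :
    ∃ D : Set ℝ, ∃ nxt : ℝ → ℝ,
      (∀ a b : ℝ, (D ∩ Set.Icc a b).Finite) ∧
      (∀ p : ℝ, p < nxt p ∧ nxt p ≤ p + 1) ∧
      (∀ t : ℝ, ∃ p ∈ D, t ∈ Set.Icc p (nxt p)) ∧
      (∀ p : ℝ, Set.InjOn f (Set.Icc p (nxt p))) ∧
      D.Countable := by
  classical
  have hfd : Differentiable ℝ f := fun t => (han t).differentiableAt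
  have hfc : Continuous f := hfd.continuous
  have hderiv_an : AnalyticOnNhd ℝ (deriv f) Set.univ :=
    AnalyticOnNhd.deriv (fun t _ => han t)
  have hdc : Continuous (deriv f) := by
    rw [continuous_iff_continuousAt]
    exact fun t => (hderiv_an t (Set.mem_univ t)).continuousAt
  have hdne : ¬ ∀ t, deriv f t = 0 := by
    intro hall
    obtain ⟨a, b, hab⟩ := hnc
    exact hab (is_const_of_deriv_eq_zero hfd hall a b)
  -- zeros of the derivative are finite on compact intervals
  have hzfin : ∀ a b : ℝ, ({t | deriv f t = 0} ∩ Set.Icc a b).Finite := by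
    intro a b
    by_contra hinf
    have hinf' : ({t | deriv f t = 0} ∩ Set.Icc a b).Infinite := hinf
    set u : ℕ → ℝ := fun m => (hinf'.natEmbedding _ m : ℝ) with hu
    have humem : ∀ m, u m ∈ {t | deriv f t = 0} ∩ Set.Icc a b := fun m =>
      (hinf'.natEmbedding _ m).2
    have huinj : Function.Injective u := fun m m' h =>
      (hinf'.natEmbedding _).injective (Subtype.val_injective h)
    obtain ⟨z₀, hz₀, φ, hφ, hconv⟩ :=
      isCompact_Icc.tendsto_subseq (fun m => (humem m).2)
    have hfreq : ∃ᶠ z in nhdsWithin z₀ {z₀}ᶜ, deriv f z = 0 := by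
      rw [Filter.frequently_iff]
      intro V hV
      obtain ⟨O, hOo, hz₀O, hOV⟩ := mem_nhdsWithin.mp hV
      have hev : ∀ᶠ m in Filter.atTop, u (φ m) ∈ O :=
        hconv (hOo.mem_nhds hz₀O)
      obtain ⟨M, hM⟩ := Filter.eventually_atTop.mp hev
      have hujinj : Function.Injective (fun m => u (φ m)) := huinj.comp hφ.injective
      by_cases hMz : u (φ M) = z₀
      · refine ⟨u (φ (M+1)), hOV ⟨hM (M+1) (by omega), ?_⟩, (humem (φ (M+1))).1⟩
        simp only [Set.mem_compl_iff, Set.mem_singleton_iff]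
        intro h
        exact absurd (hujinj (h.trans hMz.symm) : M + 1 = M) (by omega)
      · exact ⟨u (φ M), hOV ⟨hM M le_rfl, hMz⟩, (humem (φ M)).1⟩
    have := hderiv_an.eqOn_zero_of_preconnected_of_frequently_eq_zero
      isPreconnected_univ (Set.mem_univ z₀) hfreq
    exact hdne fun t => this (Set.mem_univ t)
  set D : Set ℝ := {t | deriv f t = 0} ∪ Set.range (fun k : ℤ => (k : ℝ)) with hD
  have hDint : ∀ k : ℤ, (k : ℝ) ∈ D := fun k => Or.inr ⟨k, rfl⟩
  have hDfin : ∀ a b : ℝ, (D ∩ Set.Icc a b).Finite := by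
    intro a b
    rw [hD, Set.union_inter_distrib_right]
    apply Set.Finite.union (hzfin a b)
    apply Set.Finite.subset ((Set.finite_Icc (⌈a⌉ : ℤ) ⌊b⌋).image (fun k : ℤ => (k : ℝ)))
    rintro x ⟨⟨k, rfl⟩, hk1, hk2⟩
    exact ⟨k, ⟨Int.ceil_le.mpr hk1, Int.le_floor.mpr hk2⟩, rfl⟩
  have hDcnt : D.Countable := by
    have hsub : D ⊆ ⋃ k : ℤ, D ∩ Set.Icc (k : ℝ) (k + 1) := by
      intro t ht
      refine Set.mem_iUnion.mpr ⟨⌊t⌋, ht, Int.floor_le t, ?_⟩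
      have := (Int.lt_floor_add_one t).le
      push_cast
      linarith
    exact Set.Countable.mono hsub
      (Set.countable_iUnion fun k => (hDfin _ _).countable)
  set nxt : ℝ → ℝ := fun p => sInf (D ∩ Set.Ioc p (p + 1)) with hnxt
  have hQ : ∀ p : ℝ, (D ∩ Set.Ioc p (p+1)).Nonempty ∧ (D ∩ Set.Ioc p (p+1)).Finite := by
    intro p
    constructor
    · refine ⟨((⌊p⌋ + 1 : ℤ) : ℝ), hDint _, ?_, ?_⟩
      · push_cast
        exact Int.lt_floor_add_one p
      · have := Int.floor_le p
        push_cast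
        linarith
    · exact Set.Finite.subset (hDfin p (p+1))
        (Set.inter_subset_inter_right D Set.Ioc_subset_Icc_self)
  have hnxt_mem : ∀ p : ℝ, nxt p ∈ D ∩ Set.Ioc p (p+1) := fun p =>
    (hQ p).1.csInf_mem (hQ p).2
  have hnxt_gap : ∀ p q : ℝ, q ∈ D → p < q → ¬ q < nxt p := by
    intro p q hqD hpq hq
    have hq1 : q ≤ p + 1 := le_trans hq.le (hnxt_mem p).2.2
    have : nxt p ≤ q := csInf_le ((hQ p).2.bddBelow) ⟨hqD, hpq, hq1⟩
    exact absurd hq (not_lt.mpr this)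
  have hnxt_lt : ∀ p : ℝ, p < nxt p ∧ nxt p ≤ p + 1 := fun p =>
    ⟨(hnxt_mem p).2.1, (hnxt_mem p).2.2⟩
  have hcover : ∀ t : ℝ, ∃ p ∈ D, t ∈ Set.Icc p (nxt p) := by
    intro t
    set Q' : Set ℝ := D ∩ Set.Icc (t-1) t with hQ'
    have hQ'ne : Q'.Nonempty := by
      refine ⟨((⌊t⌋ : ℤ) : ℝ), hDint _, ?_, Int.floor_le t⟩
      have := (Int.lt_floor_add_one t).le
      push_cast
      linarith
    have hQ'fin : Q'.Finite := hDfin (t-1) t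
    set p : ℝ := sSup Q' with hp
    have hpmem : p ∈ Q' := hQ'ne.csSup_mem hQ'fin
    refine ⟨p, hpmem.1, hpmem.2.2, ?_⟩
    by_contra hlt
    push_neg at hlt
    have hnp := hnxt_mem p
    have h1 : nxt p ∈ Q' := ⟨hnp.1, by
      constructor
      · have := hpmem.2.1
        linarith [hnp.2.1]
      · exact hlt.le⟩
    have : nxt p ≤ p := le_csSup hQ'fin.bddAbove h1
    linarith [hnp.2.1]
  have hinj : ∀ p : ℝ, Set.InjOn f (Set.Icc p (nxt p)) := by
    intro p
    have hne0 : ∀ x ∈ Set.Ioo p (nxt p), deriv f x ≠ 0 := by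
      intro x hx h0
      exact hnxt_gap p x (Or.inl h0) hx.1 hx.2
    by_cases hsgn : ∀ x ∈ Set.Ioo p (nxt p), 0 < deriv f x
    · have := strictMonoOn_of_deriv_pos (convex_Icc p (nxt p)) hfc.continuousOn
        (fun x hx => hsgn x (by rwa [interior_Icc] at hx))
      exact this.injOn
    · push_neg at hsgn
      obtain ⟨x₀, hx₀, hx₀le⟩ := hsgn
      have hx₀neg : deriv f x₀ < 0 := lt_of_le_of_ne hx₀le (hne0 x₀ hx₀)
      have hneg : ∀ x ∈ Set.Ioo p (nxt p), deriv f x < 0 := by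
        intro x hx
        rcases lt_or_ge (deriv f x) 0 with h | h
        · exact h
        have hxpos : 0 < deriv f x := lt_of_le_of_ne h (Ne.symm (hne0 x hx))
        exfalso
        have hIcc : Set.uIcc x₀ x ⊆ Set.Ioo p (nxt p) :=
          (Set.ordConnected_Ioo).uIcc_subset hx₀ hx
        have h0m : (0:ℝ) ∈ Set.uIcc (deriv f x₀) (deriv f x) := by
          rw [Set.mem_uIcc]
          left
          exact ⟨hx₀neg.le, hxpos.le⟩
        obtain ⟨z, hz, hz0⟩ := intermediate_value_uIcc
          (hdc.continuousOn (s := Set.uIcc x₀ x)) h0m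
        exact hne0 z (hIcc hz) hz0
      have := strictAntiOn_of_deriv_neg (convex_Icc p (nxt p)) hfc.continuousOn
        (fun x hx => hneg x (by rwa [interior_Icc] at hx))
      exact this.injOn
  exact ⟨D, nxt, hDfin, hnxt_lt, hcover, hinj, hDcnt⟩

end Analysis

/-- For a finite graph `G` and a non-constant odd real-analytic `f`
(acting componentwise on edge space `ℝ^E`), the topological dimensions satisfy
`dim( f⁻¹(H₁) ∩ H₁^⊥ ) ≤ dim( H₁ ∩ f(H₁^⊥) )`, where `H₁ = ker B` is the first
homology group of `G`. -/
theorem stmt_12 {V : Type} [Fintype V] [DecidableEq V]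
    (G : SimpleGraph V) [DecidableRel G.Adj]
    (f : ℝ → ℝ) (hodd : ∀ t : ℝ, f (-t) = -f t)
    (hnc : ∃ a b : ℝ, f a ≠ f b) (han : ∀ t : ℝ, AnalyticAt ℝ f t)
    (Eo : Finset (V × V)) (hor : IsOrientation G Eo)
    (B : Matrix V {e // e ∈ Eo} ℝ)
    (hB : ∀ (i : V) (e : {e // e ∈ Eo}),
      B i e = (if i = (e : V × V).2 then (1 : ℝ) else 0)
            - (if i = (e : V × V).1 then (1 : ℝ) else 0))
    (H₁ : Submodule ℝ ({e // e ∈ Eo} → ℝ)) (hH₁ : H₁ = LinearMap.ker B.mulVecLin) :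
    setCoveringDim {y : {e // e ∈ Eo} → ℝ |
        (fun e => f (y e)) ∈ H₁ ∧ ∀ z ∈ H₁, ∑ e, y e * z e = 0} ≤
    setCoveringDim {z : {e // e ∈ Eo} → ℝ |
        z ∈ H₁ ∧ ∃ y : {e // e ∈ Eo} → ℝ,
          (∀ w ∈ H₁, ∑ e, y e * w e = 0) ∧ (fun e => f (y e)) = z} := by
  classical
  obtain ⟨D, nxt, hDfin, hnxt, hcoverD, hinjD, hDcnt⟩ := analysis_main hnc han
  set Adef : Set ({e // e ∈ Eo} → ℝ) :=
    {y | (fun e => f (y e)) ∈ H₁ ∧ ∀ z ∈ H₁, ∑ e, y e * z e = 0} with hAdef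
  set Bdef : Set ({e // e ∈ Eo} → ℝ) :=
    {z | z ∈ H₁ ∧ ∃ y : {e // e ∈ Eo} → ℝ,
      (∀ w ∈ H₁, ∑ e, y e * w e = 0) ∧ (fun e => f (y e)) = z} with hBdef
  simp only [setCoveringDim, coveringDim]
  apply sInf_le_sInf
  rintro d ⟨n, rfl, hdim⟩
  refine ⟨n, rfl, ?_⟩
  apply coveringDimLE_of_dimLERel
  have hBrel : DimLERel ({e // e ∈ Eo} → ℝ) Bdef n := dimLERel_of_coveringDimLE hdim
  have hfc : Continuous f := by
    rw [continuous_iff_continuousAt]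
    exact fun t => (han t).continuousAt
  set Φ : ({e // e ∈ Eo} → ℝ) → ({e // e ∈ Eo} → ℝ) := fun y e => f (y e) with hΦ
  have hΦc : Continuous Φ := continuous_pi (fun e => hfc.comp (continuous_apply e))
  have hH₁closed : IsClosed (H₁ : Set ({e // e ∈ Eo} → ℝ)) :=
    Submodule.closed_of_finiteDimensional _
  have hAclosed : IsClosed Adef := by
    have h1 : IsClosed {y : {e // e ∈ Eo} → ℝ | Φ y ∈ H₁} := hH₁closed.preimage hΦc
    have h2 : IsClosed {y : {e // e ∈ Eo} → ℝ | ∀ z ∈ H₁, ∑ e, y e * z e = 0} := by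
      have heq : {y : {e // e ∈ Eo} → ℝ | ∀ z ∈ H₁, ∑ e, y e * z e = 0}
          = ⋂ z ∈ (H₁ : Set ({e // e ∈ Eo} → ℝ)), {y | ∑ e, y e * z e = 0} := by
        ext y
        simp only [Set.mem_setOf_eq, Set.mem_iInter, SetLike.mem_coe]
      rw [heq]
      refine isClosed_biInter (fun z _ => ?_)
      exact isClosed_eq
        (continuous_finset_sum Finset.univ
          (fun e _ => (continuous_apply e).mul continuous_const)) continuous_const
    exact h1.inter h2
  -- index type for the boxes
  haveI : Countable ↥D := hDcnt.to_subtype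
  obtain ⟨gnat, hgnat⟩ := Countable.exists_injective_nat ({e // e ∈ Eo} → ↥D)
  set box : ({e // e ∈ Eo} → ↥D) → Set ({e // e ∈ Eo} → ℝ) :=
    fun c => Set.pi Set.univ (fun e => Set.Icc ((c e : ℝ)) (nxt (c e))) with hbox
  have hboxcpt : ∀ c, IsCompact (box c) := fun c => isCompact_univ_pi (fun e => isCompact_Icc)
  set FF : ℕ → Set ({e // e ∈ Eo} → ℝ) :=
    fun m => if h : ∃ c : ({e // e ∈ Eo} → ↥D), gnat c = m
      then Adef ∩ box h.choose else ∅ with hFF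
  have hpiece : ∀ c : ({e // e ∈ Eo} → ↥D), DimLERel ({e // e ∈ Eo} → ℝ) (Adef ∩ box c) n := by
    intro c
    have hinjbox : Set.InjOn Φ (box c) := by
      intro y hy y' hy' heq
      funext e
      exact hinjD (c e) (hy e (Set.mem_univ e)) (hy' e (Set.mem_univ e)) (congrFun heq e)
    have hPc : IsCompact (Adef ∩ box c) := (hboxcpt c).inter_left hAclosed
    have himg : Φ '' (Adef ∩ box c) ⊆ Bdef := by
      rintro _ ⟨y, hy, rfl⟩
      exact ⟨hy.1.1, y, hy.1.2, rfl⟩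
    have hclosed_img : IsClosed (Φ '' (Adef ∩ box c)) := (hPc.image hΦc).isClosed
    exact DimLERel.of_image hΦc hPc (hinjbox.mono Set.inter_subset_right)
      (hBrel.mono_closed himg hclosed_img)
  have hemptydim : DimLERel ({e // e ∈ Eo} → ℝ) (∅ : Set ({e // e ∈ Eo} → ℝ)) n := by
    intro ι U hUo hUc
    exact ⟨PEmpty, fun k => ∅, fun k => isOpen_empty, by simp, fun k => k.elim,
      fun x hx => absurd hx (Set.notMem_empty x)⟩
  apply DimLERel.of_locFin_compact_cover (F := FF)
  · intro r
    rw [hFF]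
    dsimp only
    split
    · exact (hboxcpt _).inter_left hAclosed
    · exact isCompact_empty
  · intro r
    rw [hFF]
    dsimp only
    split
    · exact Set.inter_subset_left
    · exact Set.empty_subset _
  · -- covering
    intro y hy
    have hc : ∀ e : {e // e ∈ Eo}, ∃ p ∈ D, y e ∈ Set.Icc p (nxt p) := fun e => hcoverD (y e)
    choose pfun hpD hpmem using hc
    set c : ({e // e ∈ Eo} → ↥D) := fun e => ⟨pfun e, hpD e⟩ with hcdef
    refine Set.mem_iUnion.mpr ⟨gnat c, ?_⟩
    rw [hFF]
    dsimp only
    rw [dif_pos ⟨c, rfl⟩]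
    have hch : (⟨c, rfl⟩ : ∃ c' : ({e // e ∈ Eo} → ↥D), gnat c' = gnat c).choose = c :=
      hgnat (Exists.choose_spec (⟨c, rfl⟩ : ∃ c', gnat c' = gnat c))
    rw [hch]
    exact ⟨hy, fun e _ => hpmem e⟩
  · -- local finiteness
    intro x hx
    refine ⟨Metric.ball x 1, Metric.mem_ball_self one_pos, Metric.isOpen_ball, ?_⟩
    have hfinSe : ∀ e : {e // e ∈ Eo},
        {q : ↥D | (q : ℝ) ∈ Set.Icc (x e - 2) (x e + 1)}.Finite := by
      intro e
      have heq : {q : ↥D | (q : ℝ) ∈ Set.Icc (x e - 2) (x e + 1)}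
          = Subtype.val ⁻¹' (D ∩ Set.Icc (x e - 2) (x e + 1)) := by
        ext q
        simp [q.2]
      rw [heq]
      exact Set.Finite.preimage Subtype.val_injective.injOn (hDfin _ _)
    have hTS : {c : ({e // e ∈ Eo} → ↥D) | (box c ∩ Metric.ball x 1).Nonempty}.Finite := by
      refine Set.Finite.subset (Set.Finite.pi hfinSe) ?_
      rintro c ⟨y, hybox, hyball⟩
      refine Set.mem_univ_pi.mpr fun e => ?_
      have h1 : dist (y e) (x e) < 1 :=
        (dist_pi_lt_iff one_pos).mp (by rwa [Metric.mem_ball] at hyball) e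
      have h2 := hybox e (Set.mem_univ e)
      have h3 := hnxt (c e)
      rw [Real.dist_eq] at h1
      have h4 := abs_lt.mp h1
      simp only [Set.mem_setOf_eq, Set.mem_Icc] at h2 ⊢
      constructor <;> linarith [h2.1, h2.2, h3.1, h3.2, h4.1, h4.2]
    apply Set.Finite.subset (hTS.image gnat)
    intro m hm
    simp only [Set.mem_setOf_eq] at hm
    rw [hFF] at hm
    dsimp only at hm
    by_cases h : ∃ c : ({e // e ∈ Eo} → ↥D), gnat c = m
    · rw [dif_pos h] at hm
      refine ⟨h.choose, ?_, h.choose_spec⟩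
      obtain ⟨y, hy1, hy2⟩ := hm
      exact ⟨y, hy1.2, hy2⟩
    · rw [dif_neg h] at hm
      simp at hm
  · -- dimension of each piece
    intro r
    rw [hFF]
    dsimp only
    split
    · exact hpiece _
    · exact hemptydim
end

section
/- Let H and K be finite connected graphs whose vertex sets intersect in exactly one vertex k and whose edge sets are disjoint, and let G = H ∪ K. Let f : ℝ → ℝ be an odd continuous function with primitive g, and let E_G, E_H, E_K denote the corresponding energy functions, so that E_G(x) = E_H(x|_{V(H)}) + E_K(x|_{V(K)}). Then an equilibrium x ∈ ℝ^{V(G)} is a local minimizer of E_G if and only if x|_{V(H)} is a local minimizer of E_H and x|_{V(K)} is a local minimizer of E_K. -/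
open Finset

theorem Function.Odd.even_of_hasDerivAt {F : Type*} [NormedAddCommGroup F] [NormedSpace ℝ F]
    {f g : ℝ → F} (hf : Function.Odd f) (hg : ∀ t, HasDerivAt g (f t) t) : Function.Even g := by
  have hderiv : ∀ t, HasDerivAt (fun t => g (-t) - g t) 0 t := fun t => by
    have h := ((hg (-t)).scomp t (hasDerivAt_neg t)).sub (hg t)
    rwa [hf t, neg_one_smul, neg_neg, sub_self] at h
  intro t
  have := is_const_of_deriv_eq_zero (fun t => (hderiv t).differentiableAt)
    (fun t => (hderiv t).deriv) t 0
  simpa [sub_eq_zero] using this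

theorem IsOrientation.sum_eq_sum_edgeFinset {α : Type} {M : Type*} [AddCommMonoid M]
    {G : SimpleGraph α} [Fintype G.edgeSet] {Eo : Finset (α × α)} (hEo : IsOrientation G Eo)
    (F : {F : α → α → M // ∀ a b, F a b = F b a}) :
    ∑ e ∈ Eo, F.1 e.1 e.2 = ∑ s ∈ G.edgeFinset, Sym2.lift F s := by
  obtain ⟨hadj, hcover, hasymm⟩ := hEo
  refine sum_bij (fun e _ => s(e.1, e.2)) (fun e he => G.mem_edgeFinset.2 (hadj e he))
    (fun e₁ h₁ e₂ h₂ heq => ?_) (fun s hs => ?_) (fun e _ => (Sym2.lift_mk F _ _).symm)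
  · rcases Sym2.mk_eq_mk_iff.1 heq with h | h
    · exact h
    · exact (hasymm _ _ h₂ (by rwa [h] at h₁)).elim
  · induction s with
    | _ a b =>
      rcases hcover a b (G.mem_edgeFinset.1 hs) with h | h
      · exact ⟨(a, b), h, rfl⟩
      · exact ⟨(b, a), h, Sym2.eq_swap⟩

def orientedEnergy {α : Type} (Eo : Finset (α × α)) (g : ℝ → ℝ) (y : α → ℝ) : ℝ :=
  ∑ e ∈ Eo, g (y e.2 - y e.1)

theorem orientedEnergy_add_const {α : Type} (Eo : Finset (α × α)) (g : ℝ → ℝ) (y : α → ℝ)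
    (c : ℝ) : orientedEnergy Eo g (fun i => y i + c) = orientedEnergy Eo g y := by
  simp only [orientedEnergy, add_sub_add_right_eq_sub]

theorem IsOrientation.orientedEnergy_eq {α : Type} {G : SimpleGraph α} [Fintype G.edgeSet]
    {Eo : Finset (α × α)} (hEo : IsOrientation G Eo) {g : ℝ → ℝ} (hg : Function.Even g)
    (y : α → ℝ) :
    orientedEnergy Eo g y = ∑ s ∈ G.edgeFinset,
      Sym2.lift ⟨fun a b => g (y b - y a), fun a b => by dsimp only; rw [← hg, neg_sub]⟩ s :=
  hEo.sum_eq_sum_edgeFinset ⟨fun a b => g (y b - y a), _⟩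

section Gluing

variable {V : Type} {VH VK : Finset V} {H : SimpleGraph VH} {K : SimpleGraph VK}
  {G : SimpleGraph V}

theorem eq_sup_map_subtype
    (hG : ∀ i j : V, G.Adj i j ↔
      ((∃ (hi : i ∈ VH) (hj : j ∈ VH), H.Adj ⟨i, hi⟩ ⟨j, hj⟩) ∨
       (∃ (hi : i ∈ VK) (hj : j ∈ VK), K.Adj ⟨i, hi⟩ ⟨j, hj⟩))) :
    G = H.map (Function.Embedding.subtype _) ⊔ K.map (Function.Embedding.subtype _) := by
  ext i j
  rw [SimpleGraph.sup_adj, SimpleGraph.map_adj, SimpleGraph.map_adj, hG]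
  simp

theorem disjoint_map_subtype
    (hdisj : ∀ (i j : V) (hiH : i ∈ VH) (hjH : j ∈ VH) (hiK : i ∈ VK) (hjK : j ∈ VK),
      ¬(H.Adj ⟨i, hiH⟩ ⟨j, hjH⟩ ∧ K.Adj ⟨i, hiK⟩ ⟨j, hjK⟩)) :
    Disjoint (H.map (Function.Embedding.subtype _)) (K.map (Function.Embedding.subtype _)) := by
  rw [SimpleGraph.disjoint_left]
  simp only [SimpleGraph.map_adj]
  rintro _ _ ⟨⟨a, ha⟩, ⟨b, hb⟩, hab, rfl, rfl⟩ ⟨⟨c, hc⟩, ⟨d, hd⟩, hcd, rfl, rfl⟩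
  exact hdisj _ _ ha hb hc hd ⟨hab, hcd⟩

theorem orientedEnergy_eq_add [Fintype V]
    (hG : ∀ i j : V, G.Adj i j ↔
      ((∃ (hi : i ∈ VH) (hj : j ∈ VH), H.Adj ⟨i, hi⟩ ⟨j, hj⟩) ∨
       (∃ (hi : i ∈ VK) (hj : j ∈ VK), K.Adj ⟨i, hi⟩ ⟨j, hj⟩)))
    (hdisj : ∀ (i j : V) (hiH : i ∈ VH) (hjH : j ∈ VH) (hiK : i ∈ VK) (hjK : j ∈ VK),
      ¬(H.Adj ⟨i, hiH⟩ ⟨j, hjH⟩ ∧ K.Adj ⟨i, hiK⟩ ⟨j, hjK⟩))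
    {g : ℝ → ℝ} (hg : Function.Even g) {EG : Finset (V × V)} {EH : Finset (VH × VH)}
    {EK : Finset (VK × VK)} (horG : IsOrientation G EG) (horH : IsOrientation H EH)
    (horK : IsOrientation K EK) (y : V → ℝ) :
    orientedEnergy EG g y =
      orientedEnergy EH g (VH.restrict y) + orientedEnergy EK g (VK.restrict y) := by
  classical
  rw [horG.orientedEnergy_eq hg, horH.orientedEnergy_eq hg, horK.orientedEnergy_eq hg]
  obtain rfl := eq_sup_map_subtype hG
  simp only [SimpleGraph.edgeFinset_sup]
  rw [sum_union (SimpleGraph.disjoint_edgeFinset.2 (disjoint_map_subtype hdisj)),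
    SimpleGraph.edgeFinset_map, SimpleGraph.edgeFinset_map, sum_map, sum_map]
  simp [Sym2.lift_map_apply]

end Gluing

section LocalMin

variable {V : Type} [DecidableEq V] {VH VK : Finset V} {kv : V}

theorem isLocalMin_of_isLocalMin_add_restrict (hk : VH ∩ VK = {kv}) {A : (VH → ℝ) → ℝ}
    {B : (VK → ℝ) → ℝ} (hB : ∀ z c, B (fun i => z i + c) = B z) {x : V → ℝ}
    (h : IsLocalMin (fun y => A (VH.restrict y) + B (VK.restrict y)) x) :
    IsLocalMin A (VH.restrict x) := by
  have hkH : kv ∈ VH := (mem_inter.1 (hk ▸ mem_singleton_self kv)).1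
  have hkv : ∀ i ∈ VH, i ∈ VK → i = kv := fun i hiH hiK =>
    mem_singleton.1 (hk ▸ mem_inter.2 ⟨hiH, hiK⟩)
  -- Off `VH`, move `x` rigidly by the displacement of the cut vertex: this keeps `B` unchanged.
  let extend : (VH → ℝ) → V → ℝ := fun z i =>
    if hi : i ∈ VH then z ⟨i, hi⟩ else x i + (z ⟨kv, hkH⟩ - x kv)
  have extend_continuous : Continuous extend := continuous_pi fun i => by
    by_cases hi : i ∈ VH
    · simp only [extend, hi, dif_pos]; fun_prop
    · simp only [extend, hi, dif_neg, not_false_eq_true]; fun_prop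
  have extend_restrict : extend (VH.restrict x) = x := by
    funext i; by_cases hi : i ∈ VH <;> simp [extend, hi]
  have restrict_extend_H : ∀ z, VH.restrict (extend z) = z := fun z => funext fun i => dif_pos i.2
  have restrict_extend_K : ∀ z, VK.restrict (extend z) =
      fun i => VK.restrict x i + (z ⟨kv, hkH⟩ - x kv) := fun z => funext fun i => by
    by_cases hi : (i : V) ∈ VH
    · obtain rfl : (i : V) = kv := hkv i hi i.2
      simp [extend, hi]
    · simp [extend, hi]
  rw [← extend_restrict] at h
  filter_upwards [h.comp_continuous extend_continuous.continuousAt] with z hz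
  simpa [restrict_extend_H, restrict_extend_K, hB] using hz

theorem isLocalMin_add_restrict_iff (hk : VH ∩ VK = {kv}) {A : (VH → ℝ) → ℝ}
    {B : (VK → ℝ) → ℝ} (hA : ∀ z c, A (fun i => z i + c) = A z)
    (hB : ∀ z c, B (fun i => z i + c) = B z) {x : V → ℝ} :
    IsLocalMin (fun y => A (VH.restrict y) + B (VK.restrict y)) x ↔
      IsLocalMin A (VH.restrict x) ∧ IsLocalMin B (VK.restrict x) := by
  refine ⟨fun h => ⟨isLocalMin_of_isLocalMin_add_restrict hk hB h, ?_⟩, fun ⟨hAx, hBx⟩ => ?_⟩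
  · rw [inter_comm] at hk
    exact isLocalMin_of_isLocalMin_add_restrict hk hA (by simpa only [add_comm] using h)
  · exact (hAx.comp_continuous (by fun_prop)).add (hBx.comp_continuous (by fun_prop))

end LocalMin

theorem stmt_18_general {V : Type} [Fintype V] [DecidableEq V]
    (VH VK : Finset V) (kv : V) (hk : VH ∩ VK = {kv})
    (H : SimpleGraph {v // v ∈ VH})
    (K : SimpleGraph {v // v ∈ VK})
    (G : SimpleGraph V)
    (hG : ∀ i j : V, G.Adj i j ↔
      ((∃ (hi : i ∈ VH) (hj : j ∈ VH), H.Adj ⟨i, hi⟩ ⟨j, hj⟩) ∨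
       (∃ (hi : i ∈ VK) (hj : j ∈ VK), K.Adj ⟨i, hi⟩ ⟨j, hj⟩)))
    (hdisj : ∀ (i j : V) (hiH : i ∈ VH) (hjH : j ∈ VH) (hiK : i ∈ VK) (hjK : j ∈ VK),
      ¬(H.Adj ⟨i, hiH⟩ ⟨j, hjH⟩ ∧ K.Adj ⟨i, hiK⟩ ⟨j, hjK⟩))
    (f : ℝ → ℝ) (hodd : ∀ t : ℝ, f (-t) = -f t)
    (g : ℝ → ℝ) (hg : ∀ t : ℝ, HasDerivAt g (f t) t)
    (EG : Finset (V × V)) (horG : IsOrientation G EG)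
    (EH : Finset ({v // v ∈ VH} × {v // v ∈ VH})) (horH : IsOrientation H EH)
    (EK : Finset ({v // v ∈ VK} × {v // v ∈ VK})) (horK : IsOrientation K EK)
    (x : V → ℝ) :
    IsLocalMin (fun y : V → ℝ => ∑ e ∈ EG, g (y e.2 - y e.1)) x ↔
      (IsLocalMin (fun y : {v // v ∈ VH} → ℝ => ∑ e ∈ EH, g (y e.2 - y e.1))
          (fun i : {v // v ∈ VH} => x i) ∧
       IsLocalMin (fun y : {v // v ∈ VK} → ℝ => ∑ e ∈ EK, g (y e.2 - y e.1))
          (fun i : {v // v ∈ VK} => x i)) := by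
  have hg_even : Function.Even g := Function.Odd.even_of_hasDerivAt hodd hg
  have hsplit : (fun y : V → ℝ => ∑ e ∈ EG, g (y e.2 - y e.1)) =
      fun y => orientedEnergy EH g (VH.restrict y) + orientedEnergy EK g (VK.restrict y) :=
    funext (orientedEnergy_eq_add hG hdisj hg_even horG horH horK)
  rw [hsplit]
  exact isLocalMin_add_restrict_iff hk (orientedEnergy_add_const EH g)
    (orientedEnergy_add_const EK g)

/-- Let `G = H ∪ K` where the finite connected graphs `H` and `K` meet
in exactly one vertex `kv` and have disjoint edge sets, let `f` be odd continuous
with primitive `g`, and let `E_G, E_H, E_K` be the corresponding energies.  Then an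
equilibrium `x` of `G` is a local minimizer of `E_G` iff `x|_{V(H)}` is a local
minimizer of `E_H` and `x|_{V(K)}` is a local minimizer of `E_K`. -/
theorem stmt_18 {V : Type} [Fintype V] [DecidableEq V]
    (VH VK : Finset V) (kv : V) (hk : VH ∩ VK = {kv}) (hU : VH ∪ VK = Finset.univ)
    (H : SimpleGraph {v // v ∈ VH}) [DecidableRel H.Adj] (hH : H.Connected)
    (K : SimpleGraph {v // v ∈ VK}) [DecidableRel K.Adj] (hK : K.Connected)
    (G : SimpleGraph V) [DecidableRel G.Adj]
    (hG : ∀ i j : V, G.Adj i j ↔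
      ((∃ (hi : i ∈ VH) (hj : j ∈ VH), H.Adj ⟨i, hi⟩ ⟨j, hj⟩) ∨
       (∃ (hi : i ∈ VK) (hj : j ∈ VK), K.Adj ⟨i, hi⟩ ⟨j, hj⟩)))
    (hdisj : ∀ (i j : V) (hiH : i ∈ VH) (hjH : j ∈ VH) (hiK : i ∈ VK) (hjK : j ∈ VK),
      ¬(H.Adj ⟨i, hiH⟩ ⟨j, hjH⟩ ∧ K.Adj ⟨i, hiK⟩ ⟨j, hjK⟩))
    (f : ℝ → ℝ) (hodd : ∀ t : ℝ, f (-t) = -f t) (hcont : Continuous f)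
    (g : ℝ → ℝ) (hg : ∀ t : ℝ, HasDerivAt g (f t) t)
    (EG : Finset (V × V)) (horG : IsOrientation G EG)
    (EH : Finset ({v // v ∈ VH} × {v // v ∈ VH})) (horH : IsOrientation H EH)
    (EK : Finset ({v // v ∈ VK} × {v // v ∈ VK})) (horK : IsOrientation K EK)
    (x : V → ℝ) (hx : ∀ i : V, ∑ j ∈ G.neighborFinset i, f (x j - x i) = 0) :
    IsLocalMin (fun y : V → ℝ => ∑ e ∈ EG, g (y e.2 - y e.1)) x ↔
      (IsLocalMin (fun y : {v // v ∈ VH} → ℝ => ∑ e ∈ EH, g (y e.2 - y e.1))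
          (fun i : {v // v ∈ VH} => x i) ∧
       IsLocalMin (fun y : {v // v ∈ VK} → ℝ => ∑ e ∈ EK, g (y e.2 - y e.1))
          (fun i : {v // v ∈ VK} => x i)) :=
  stmt_18_general VH VK kv hk H K G hG hdisj f hodd g hg EG horG EH horH EK horK x
end

section
/- Let p ≥ 2 and let B_p be the triangular book graph with p pages: vertices u, v, w₁, …, w_p and edges {u,v} and {u,w_k}, {v,w_k} for k = 1, …, p. Let f : ℝ → ℝ be an odd function and P > 0 a real number such that f(P + x) = −f(x) for every x ∈ ℝ. Then for every (x₁, …, x_p) ∈ ℝ^p satisfying Σ_{k=1}^p f(x_k) = 0, the configuration given by x_u = 0, x_v = P, and x_{w_k} = x_k for each k is an equilibrium of the system ẋ_i = Σ_{j ∈ N(i)} f(x_j − x_i) on B_p. -/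
/-- Let `B_p` (`p ≥ 2`) be the triangular book graph with spine `{u,v}`
and page vertices `w₁, …, w_p` (vertices `u = inl 0`, `v = inl 1`, `w_k = inr k`;
edges `{u,v}`, `{u,w_k}`, `{v,w_k}`).  Let `f` be odd with `f(P + t) = −f(t)` for
some `P > 0`.  Then for every `(x₁, …, x_p)` with `∑_k f(x_k) = 0`, the configuration
`x_u = 0`, `x_v = P`, `x_{w_k} = x_k` is an equilibrium of
`ẋ_i = ∑_{j ∈ N(i)} f(x_j − x_i)` on `B_p`. -/
theorem stmt_19 (p : ℕ) (hp : 2 ≤ p)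
    (G : SimpleGraph (Fin 2 ⊕ Fin p)) [DecidableRel G.Adj]
    (hG : ∀ a b : Fin 2 ⊕ Fin p, G.Adj a b ↔
      ((a = Sum.inl 0 ∧ b = Sum.inl 1) ∨ (a = Sum.inl 1 ∧ b = Sum.inl 0) ∨
       (∃ k : Fin p, a = Sum.inl 0 ∧ b = Sum.inr k) ∨
       (∃ k : Fin p, a = Sum.inr k ∧ b = Sum.inl 0) ∨
       (∃ k : Fin p, a = Sum.inl 1 ∧ b = Sum.inr k) ∨
       (∃ k : Fin p, a = Sum.inr k ∧ b = Sum.inl 1)))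
    (f : ℝ → ℝ) (hodd : ∀ t : ℝ, f (-t) = -f t)
    (P : ℝ) (hP : 0 < P) (hPf : ∀ t : ℝ, f (P + t) = -f t)
    (xs : Fin p → ℝ) (hsum : ∑ k, f (xs k) = 0) :
    ∀ i : Fin 2 ⊕ Fin p,
      ∑ j ∈ G.neighborFinset i,
        f (Sum.elim ![(0 : ℝ), P] xs j - Sum.elim ![(0 : ℝ), P] xs i) = 0 := by
  have f0 : f 0 = 0 := by have h := hodd 0; simp at h; linarith
  have fP : f P = 0 := by have h := hPf 0; simp [f0] at h; linarith
  have fsub : ∀ t : ℝ, f (t - P) = -f t := by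
    intro t
    have h := hPf (t - P)
    have : P + (t - P) = t := by ring
    rw [this] at h
    linarith
  intro i
  rw [SimpleGraph.neighborFinset_eq_filter, Finset.sum_filter, Fintype.sum_sum_type]
  rcases i with a | k
  · fin_cases a
    · simp only [hG, Fin.sum_univ_two]
      simp [fP, hsum]
    · simp only [hG, Fin.sum_univ_two]
      simp [fsub, hodd, fP, hsum, Finset.sum_neg_distrib]
  · simp only [hG, Fin.sum_univ_two]
    simp only [Sum.inr.injEq, exists_eq_right]
    have h1 : f (P - xs k) = f (xs k) := by
      rw [show P - xs k = -(xs k - P) by ring, hodd, fsub]; ring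
    simp [hodd, h1]
end
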